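/- arXiv:1910.06260 — 8 statements merged into one kernel-verified Lean document; each statement's English description precedes it below -/
import Mathlib

section
/- If a homogeneous matrix *-algebra A contains an irreducible 0-1 matrix, then the all-ones matrix J belongs to A. -/
open Matrix Polynomial
open scoped ComplexOrder

/-!
Summing, over all pairs `(i, j)`, a power of `B` with nonzero `(i, j)` entry gives an entrywise
positive `S ∈ A`. The diagonal of `B * Bᴴ ∈ A` consists of the row sums of the 0-1 matrix `B`,
so these are constant and `S *ᵥ 1 = c • 1`. If `(X - c) * g` is the minimal polynomial of `S`,
then `P = S * g(S)` lies in `A`, is nonzero and satisfies `S * P = c • P`; by the maximum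
principle each column of `P` is constant. Homogeneity makes the diagonal of `P` constant too,
so `P` is a nonzero multiple of the all-ones matrix.
-/

namespace Submodule

variable {K R : Type*}

section Semiring

variable [CommSemiring K] [Semiring R] [Algebra K R] {A : Submodule K R}

theorem pow_mem_of_mul_mem (hmul : ∀ x ∈ A, ∀ y ∈ A, x * y ∈ A) {x : R} (hx : x ∈ A) :
    ∀ {k : ℕ}, 0 < k → x ^ k ∈ A
  | 1, _ => by simpa using hx
  | k + 2, _ => by
    rw [pow_succ]
    exact hmul _ (pow_mem_of_mul_mem hmul hx k.succ_pos) _ hx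

theorem aeval_X_mul_mem (hmul : ∀ x ∈ A, ∀ y ∈ A, x * y ∈ A) {x : R} (hx : x ∈ A)
    (p : K[X]) : aeval x (X * p) ∈ A := by
  induction p using Polynomial.induction_on' with
  | add p q hp hq => rw [mul_add, map_add]; exact A.add_mem hp hq
  | monomial k a =>
    rw [X_mul_monomial, aeval_monomial, ← Algebra.smul_def]
    exact A.smul_mem a (pow_mem_of_mul_mem hmul hx k.succ_pos)

end Semiring

theorem exists_mul_eq_smul_of_isRoot_minpoly [Field K] [Ring R] [Algebra K R]
    [FiniteDimensional K R] {A : Submodule K R} (hmul : ∀ x ∈ A, ∀ y ∈ A, x * y ∈ A)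
    {x : R} (hx : x ∈ A) {c : K} (hc : c ≠ 0) (hroot : (minpoly K x).IsRoot c) :
    ∃ y ∈ A, y ≠ 0 ∧ x * y = c • y := by
  set g := minpoly K x /ₘ (X - C c)
  have hfac : (X - C c) * g = minpoly K x := mul_divByMonic_eq_iff_isRoot.mpr hroot
  have hg : g ≠ 0 := by
    rintro hg
    rw [hg, mul_zero] at hfac
    exact minpoly.ne_zero (IsIntegral.of_finite K x) hfac.symm
  refine ⟨aeval x (X * g), aeval_X_mul_mem hmul hx g, fun h0 => ?_, ?_⟩
  · -- `minpoly = (X - c) * g` has the degree of `X * g`, so it cannot divide it unless `c = 0`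
    have hdvd : (X - C c) * g ∣ X * g := hfac ▸ minpoly.dvd K x h0
    rw [mul_dvd_mul_iff_right hg, dvd_iff_isRoot, IsRoot, eval_X] at hdvd
    exact hc hdvd
  · have hann : aeval x ((X - C c) * (X * g)) = 0 := by
      rw [mul_left_comm, hfac, map_mul, minpoly.aeval, mul_zero]
    rwa [map_mul, map_sub, aeval_X, aeval_C, sub_mul, sub_eq_zero, ← Algebra.smul_def] at hann

end Submodule

namespace Matrix

variable {ι : Type*} [Fintype ι]

theorem mul_conjTranspose_apply_self_of_zero_or_one {m α : Type*} [Semiring α] [StarRing α]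
    {M : Matrix m ι α} (h01 : ∀ i j, M i j = 0 ∨ M i j = 1) (i : m) :
    (M * Mᴴ) i i = (M *ᵥ 1) i := by
  simp only [mul_apply, conjTranspose_apply, mulVec, dotProduct, Pi.one_apply, mul_one]
  exact Finset.sum_congr rfl fun j _ => by rcases h01 i j with h | h <;> simp [h]

theorem pow_mulVec_of_mulVec_eq_smul {α : Type*} [CommSemiring α] [DecidableEq ι]
    {M : Matrix ι ι α} {v : ι → α} {c : α} (h : M *ᵥ v = c • v) (k : ℕ) :
    (M ^ k) *ᵥ v = c ^ k • v := by
  induction k with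
  | zero => simp
  | succ k ih => rw [pow_succ', ← mulVec_mulVec, ih, mulVec_smul, h, smul_smul, pow_succ]

variable {T : Matrix ι ι ℂ} {c : ℂ} {v : ι → ℂ}

theorem re_eq_of_mulVec_eq_smul (hT : ∀ i j, 0 < T i j) (h1 : T *ᵥ 1 = c • 1)
    (hv : T *ᵥ v = c • v) (i j : ι) : (v i).re = (v j).re := by
  -- at an index of maximal real part, `v` is a positive weighted average of all its entries
  suffices h : ∃ i₀, ∀ j, (v j).re = (v i₀).re by
    obtain ⟨i₀, h⟩ := h
    rw [h i, h j]
  have : Nonempty ι := ⟨i⟩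
  obtain ⟨i₀, hi₀⟩ := Finite.exists_max fun j => (v j).re
  refine ⟨i₀, fun j => ?_⟩
  have hzero : ∑ k, T i₀ k * (v i₀ - v k) = 0 := by
    have h1' := congrFun h1 i₀
    have hv' := congrFun hv i₀
    simp only [mulVec, dotProduct, Pi.one_apply, mul_one, Pi.smul_apply, smul_eq_mul] at h1' hv'
    simp only [mul_sub, Finset.sum_sub_distrib, ← Finset.sum_mul, h1', hv', sub_self]
  have hre : ∑ k, (T i₀ k).re * ((v i₀).re - (v k).re) = 0 := by
    simpa [Complex.re_sum, ← (Complex.pos_iff.mp (hT i₀ _)).2] using congrArg Complex.re hzero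
  have hj := (Finset.sum_eq_zero_iff_of_nonneg fun k _ =>
    mul_nonneg (Complex.pos_iff.mp (hT i₀ k)).1.le (sub_nonneg.mpr (hi₀ k))).mp hre j
    (Finset.mem_univ j)
  rcases mul_eq_zero.mp hj with h | h
  · exact absurd h (Complex.pos_iff.mp (hT i₀ j)).1.ne'
  · linarith

theorem eq_of_mulVec_eq_smul (hT : ∀ i j, 0 < T i j) (h1 : T *ᵥ 1 = c • 1)
    (hv : T *ᵥ v = c • v) (i j : ι) : v i = v j := by
  have him := re_eq_of_mulVec_eq_smul hT h1 (v := -Complex.I • v)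
    (by rw [mulVec_smul, hv, smul_comm]) i j
  simp only [Pi.smul_apply, smul_eq_mul, neg_mul, Complex.neg_re, Complex.mul_re, Complex.I_re,
    Complex.I_im, zero_mul, one_mul, zero_sub, neg_neg] at him
  exact Complex.ext (re_eq_of_mulVec_eq_smul hT h1 hv i j) him

end Matrix

theorem Submodule.all_ones_mem_of_pos {ι : Type*} [Fintype ι] [DecidableEq ι] [Nonempty ι]
    {A : Submodule ℂ (Matrix ι ι ℂ)} (hmul : ∀ M ∈ A, ∀ N ∈ A, M * N ∈ A)
    (hhom : ∀ M ∈ A, ∀ i j, M i i = M j j) {T : Matrix ι ι ℂ} (hT : T ∈ A)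
    (hpos : ∀ i j, 0 < T i j) {c : ℂ} (h1 : T *ᵥ 1 = c • 1) :
    (of fun _ _ => (1 : ℂ) : Matrix ι ι ℂ) ∈ A := by
  inhabit ι
  have hc : c ≠ 0 := by
    have hrow := congrFun h1 default
    simp only [mulVec, dotProduct, Pi.one_apply, mul_one, Pi.smul_apply, smul_eq_mul] at hrow
    rw [← hrow]
    exact (Finset.sum_pos (fun j _ => hpos _ j) Finset.univ_nonempty).ne'
  have hroot : (minpoly ℂ T).IsRoot c := by
    rw [← minpoly_toLin']
    exact Module.End.isRoot_of_hasEigenvalue (Module.End.hasEigenvalue_of_hasEigenvector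
      ⟨Module.End.mem_eigenspace_iff.mpr (by simpa using h1), one_ne_zero⟩)
  obtain ⟨P, hPA, hP0, hTP⟩ := exists_mul_eq_smul_of_isRoot_minpoly hmul hT hc hroot
  have hcol : ∀ i j, P i j = P j j := fun i j =>
    eq_of_mulVec_eq_smul hpos h1 (v := fun k => P k j)
      (funext fun k => by
        simpa [mul_apply, mulVec, dotProduct] using congrFun (congrFun hTP k) j) i j
  set a := P default default
  have hPJ : P = a • (of fun _ _ => (1 : ℂ) : Matrix ι ι ℂ) := by
    ext i j
    simp [a, hcol i j, hhom P hPA j default]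
  have ha : a ≠ 0 := fun h => hP0 (by rw [hPJ, h, zero_smul])
  rw [show (of fun _ _ => (1 : ℂ) : Matrix ι ι ℂ) = a⁻¹ • P by
    rw [hPJ, smul_smul, inv_mul_cancel₀ ha, one_smul]]
  exact A.smul_mem _ hPA

/-- If a homogeneous matrix *-algebra contains an irreducible 0-1 matrix,
then the all-ones matrix J belongs to it. -/
theorem all_ones_mem_of_irreducible {n : ℕ}
    (A : Submodule ℂ (Matrix (Fin n) (Fin n) ℂ))
    (hmul : ∀ M ∈ A, ∀ N ∈ A, M * N ∈ A)
    (hstar : ∀ M ∈ A, Mᴴ ∈ A)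
    (hhom : ∀ M ∈ A, ∀ i j : Fin n, M i i = M j j)
    (B : Matrix (Fin n) (Fin n) ℂ)
    (hB : B ∈ A)
    (h01 : ∀ i j, B i j = 0 ∨ B i j = 1)
    -- irreducibility: the directed graph of B is strongly connected
    (hirr : ∀ i j : Fin n, ∃ k : ℕ, 0 < k ∧ (B ^ k) i j ≠ 0) :
    (Matrix.of fun _ _ => (1 : ℂ) : Matrix (Fin n) (Fin n) ℂ) ∈ A := by
  rcases n with _ | n
  · simp [Subsingleton.elim _ (0 : Matrix (Fin 0) (Fin 0) ℂ)]
  have hrow : B *ᵥ 1 = (B *ᵥ 1) 0 • 1 := funext fun i => by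
    rw [Pi.smul_apply, Pi.one_apply, smul_eq_mul, mul_one,
      ← mul_conjTranspose_apply_self_of_zero_or_one h01,
      ← mul_conjTranspose_apply_self_of_zero_or_one h01, hhom _ (hmul _ hB _ (hstar _ hB))]
  have hBnn : ∀ i j, 0 ≤ B i j := fun i j => by rcases h01 i j with h | h <;> simp [h]
  choose k hk using fun p : Fin (n + 1) × Fin (n + 1) => hirr p.1 p.2
  set S := ∑ p, B ^ k p
  have hS : S ∈ A := A.sum_mem fun p _ => A.pow_mem_of_mul_mem hmul hB (hk p).1
  have hSpos : ∀ i j, 0 < S i j := fun i j => by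
    simp only [S, Matrix.sum_apply]
    exact Finset.sum_pos' (fun p _ => pow_apply_nonneg hBnn _ _ _) ⟨(i, j), Finset.mem_univ _,
      lt_of_le_of_ne (pow_apply_nonneg hBnn _ _ _) (hk (i, j)).2.symm⟩
  have hS1 : S *ᵥ 1 = (∑ p, (B *ᵥ 1) 0 ^ k p) • 1 := by
    simp only [S, sum_mulVec, pow_mulVec_of_mulVec_eq_smul hrow, Finset.sum_smul]
  exact A.all_ones_mem_of_pos hmul hhom hS hSpos hS1
end

section
/- If a homogeneous matrix *-algebra A contains the all-ones matrix J, then J lies in the center of A; that is, MJ = JM for all M in A. Equivalently, every matrix in A has its row sums all equal to its column sums. -/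
open Matrix
open scoped ComplexOrder

/-- If a homogeneous matrix *-algebra contains the all-ones matrix J, then J
lies in the center of the algebra; equivalently, every matrix in the algebra
has all its row sums equal to all its column sums. -/
theorem all_ones_central {n : ℕ}
    (A : Submodule ℂ (Matrix (Fin n) (Fin n) ℂ))
    (hmul : ∀ M ∈ A, ∀ N ∈ A, M * N ∈ A)
    (hstar : ∀ M ∈ A, Mᴴ ∈ A)
    (hhom : ∀ M ∈ A, ∀ i j : Fin n, M i i = M j j)
    (hJ : (Matrix.of fun _ _ => (1 : ℂ) : Matrix (Fin n) (Fin n) ℂ) ∈ A) :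
    (∀ M ∈ A, M * (Matrix.of fun _ _ => (1 : ℂ)) = (Matrix.of fun _ _ => (1 : ℂ)) * M) ∧
    (∀ M ∈ A, ∀ i j : Fin n, ∑ k, M i k = ∑ k, M k j) := by
  set J : Matrix (Fin n) (Fin n) ℂ := Matrix.of fun _ _ => (1 : ℂ) with hJdef
  have key : ∀ M ∈ A, ∀ i j : Fin n, ∑ k, M i k = ∑ k, M k j := by
    intro M hM i j
    have hMJ := hmul M hM J hJ
    have hJM := hmul J hJ M hM
    have hrow : ∀ a b : Fin n, ∑ k, M a k = ∑ k, M b k := by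
      intro a b
      have := hhom _ hMJ a b
      simpa [Matrix.mul_apply, hJdef] using this
    have hcol : ∀ a b : Fin n, ∑ k, M k a = ∑ k, M k b := by
      intro a b
      have := hhom _ hJM a b
      simpa [Matrix.mul_apply, hJdef] using this
    have htot : ∑ a, ∑ k, M a k = ∑ b, ∑ k, M k b := by
      rw [Finset.sum_comm]
    have h1 : ∑ a : Fin n, ∑ k, M a k = (n : ℂ) * ∑ k, M i k := by
      rw [Finset.sum_congr rfl (fun a _ => hrow a i)]
      simp [Finset.sum_const, mul_comm]
    have h2 : ∑ b : Fin n, ∑ k, M k b = (n : ℂ) * ∑ k, M k j := by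
      rw [Finset.sum_congr rfl (fun b _ => hcol b j)]
      simp [Finset.sum_const, mul_comm]
    have hn : (n : ℂ) ≠ 0 := by
      have : 0 < n := Fin.pos i
      exact_mod_cast Nat.cast_ne_zero.mpr this.ne'
    have := h1 ▸ h2 ▸ htot
    exact mul_left_cancel₀ hn this
  refine ⟨?_, key⟩
  intro M hM
  ext i j
  simp only [Matrix.mul_apply, hJdef, Matrix.of_apply, mul_one, one_mul]
  exact key M hM i j
end

section
/- Let A be a subspace of M_n(ℂ) with an orthogonal basis I = P_0, P_1, ..., P_d (with respect to the trace inner product), and let M, N be positive semidefinite n×n matrices such that ⟨M, P_i⟩·⟨P_i, N⟩ ≤ 0 for all i ≠ 0. Then ⟨M', N'⟩ ≤ (tr M)(tr N)/n, where M', N' are the orthogonal projections of M, N onto A. Moreover, equality holds if and only if ⟨M, P_i⟩·⟨P_i, N⟩ = 0 for all i ≠ 0. -/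
/-!
Expanding `N'` in the orthogonal basis gives Parseval's identity
`⟨M', N'⟩ = ∑ᵢ ⟨M', Pᵢ⟩⟨Pᵢ, N'⟩ / ⟨Pᵢ, Pᵢ⟩`, and on the right `M'`, `N'` may be replaced by `M`, `N`
because `M - M'` and `N - N'` are orthogonal to every `Pᵢ`. Since `P₀ = I` and `N` is Hermitian,
the `i = 0` term is `(tr M)(tr N)/n`; the others are `≤ 0` by hypothesis, and vanish exactly
when their numerators do.
-/

open Matrix
open scoped ComplexOrder

section Fintype

variable {ι N : Type*} [Fintype ι] [DecidableEq ι] [AddCommMonoid N] [PartialOrder N]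
  [IsOrderedCancelAddMonoid N] {f : ι → N} {i₀ : ι}

lemma Fintype.sum_le_apply_of_nonpos (hf : ∀ i, i ≠ i₀ → f i ≤ 0) : ∑ i, f i ≤ f i₀ := by
  rw [← Finset.add_sum_erase _ f (Finset.mem_univ i₀)]
  exact add_le_of_nonpos_right <| Finset.sum_nonpos fun i hi ↦ hf i (Finset.ne_of_mem_erase hi)

lemma Fintype.sum_eq_apply_iff_of_nonpos (hf : ∀ i, i ≠ i₀ → f i ≤ 0) :
    ∑ i, f i = f i₀ ↔ ∀ i, i ≠ i₀ → f i = 0 := by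
  rw [← Finset.add_sum_erase _ f (Finset.mem_univ i₀), add_eq_left,
    Finset.sum_eq_zero_iff_of_nonpos fun i hi ↦ hf i (Finset.ne_of_mem_erase hi)]
  simp only [Finset.mem_erase, Finset.mem_univ, and_true]

end Fintype

namespace Matrix

variable {m ι 𝕜 : Type*} [Fintype m] [Fintype ι] [Field 𝕜] [StarRing 𝕜]

lemma trace_mul_conjTranspose_eq_star (A B : Matrix m m 𝕜) :
    trace (A * Bᴴ) = star (trace (B * Aᴴ)) := by
  rw [← trace_conjTranspose, conjTranspose_mul, conjTranspose_conjTranspose]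

lemma trace_mul_conjTranspose_eq_of_trace_sub_mul_conjTranspose_eq_zero {A A' B : Matrix m m 𝕜}
    (h : trace ((A - A') * Bᴴ) = 0) : trace (A' * Bᴴ) = trace (A * Bᴴ) := by
  rw [sub_mul, trace_sub, sub_eq_zero] at h
  exact h.symm

lemma trace_mul_conjTranspose_eq_sum_of_mem_span {P : ι → Matrix m m 𝕜}
    (horth : Pairwise fun i j ↦ trace (P i * (P j)ᴴ) = 0)
    (hP : ∀ i, trace (P i * (P i)ᴴ) ≠ 0) (X : Matrix m m 𝕜) {Y : Matrix m m 𝕜}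
    (hY : Y ∈ Submodule.span 𝕜 (Set.range P)) :
    trace (X * Yᴴ) = ∑ j, trace (X * (P j)ᴴ) * trace (P j * Yᴴ) / trace (P j * (P j)ᴴ) := by
  obtain ⟨b, hb⟩ := (Submodule.mem_span_range_iff_exists_fun 𝕜).mp hY
  have hYH : Yᴴ = ∑ i, star (b i) • (P i)ᴴ := by
    simp only [← hb, conjTranspose_sum, conjTranspose_smul]
  have hcoeff (j : ι) : trace (P j * Yᴴ) = star (b j) * trace (P j * (P j)ᴴ) := by
    simp only [hYH, Matrix.mul_sum, Matrix.mul_smul, trace_sum, trace_smul, smul_eq_mul]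
    exact Finset.sum_eq_single j (fun i _ hij ↦ by rw [horth hij.symm, mul_zero])
      (by simp)
  simp_rw [hcoeff, hYH, Matrix.mul_sum, Matrix.mul_smul, trace_sum, trace_smul, smul_eq_mul]
  refine Finset.sum_congr rfl fun j _ ↦ ?_
  field_simp [hP j]

end Matrix

theorem proj_inner_le_general {n d : ℕ}
    (P : Fin (d + 1) → Matrix (Fin n) (Fin n) ℂ)
    (hP0 : P 0 = 1)
    (hPnz : ∀ i, P i ≠ 0)
    (horth : ∀ i j, i ≠ j → Matrix.trace (P i * (P j)ᴴ) = 0)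
    (M N M' N' : Matrix (Fin n) (Fin n) ℂ)
    (hN : N.PosSemidef)
    (hN' : N' ∈ Submodule.span ℂ (Set.range P))
    (hMproj : ∀ i, Matrix.trace ((M - M') * (P i)ᴴ) = 0)
    (hNproj : ∀ i, Matrix.trace ((N - N') * (P i)ᴴ) = 0)
    (hneg : ∀ i, i ≠ 0 → Matrix.trace (M * (P i)ᴴ) * Matrix.trace (P i * Nᴴ) ≤ 0) :
    Matrix.trace (M' * N'ᴴ) ≤ Matrix.trace M * Matrix.trace N / n ∧
    (Matrix.trace (M' * N'ᴴ) = Matrix.trace M * Matrix.trace N / n ↔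
      ∀ i, i ≠ 0 → Matrix.trace (M * (P i)ᴴ) * Matrix.trace (P i * Nᴴ) = 0) := by
  set term : Fin (d + 1) → ℂ := fun j ↦
    trace (M * (P j)ᴴ) * trace (P j * Nᴴ) / trace (P j * (P j)ᴴ)
  have hpos (j) : 0 < trace (P j * (P j)ᴴ) :=
    (posSemidef_self_mul_conjTranspose (P j)).trace_nonneg.lt_of_ne'
      (trace_mul_conjTranspose_self_eq_zero_iff.not.mpr (hPnz j))
  have hsum : trace (M' * N'ᴴ) = ∑ j, term j := by
    rw [trace_mul_conjTranspose_eq_sum_of_mem_span horth (fun j ↦ (hpos j).ne') M' hN']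
    refine Finset.sum_congr rfl fun j _ ↦ ?_
    rw [trace_mul_conjTranspose_eq_of_trace_sub_mul_conjTranspose_eq_zero (hMproj j),
      trace_mul_conjTranspose_eq_star (P j),
      trace_mul_conjTranspose_eq_of_trace_sub_mul_conjTranspose_eq_zero (hNproj j),
      ← trace_mul_conjTranspose_eq_star]
  have hterm0 : term 0 = trace M * trace N / n := by
    simp [term, hP0, hN.isHermitian.eq]
  have hterm_nonpos (j) (hj : j ≠ 0) : term j ≤ 0 :=
    div_nonpos_of_nonpos_of_nonneg (hneg j hj) (hpos j).le
  rw [hsum, ← hterm0]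
  refine ⟨Fintype.sum_le_apply_of_nonpos hterm_nonpos, ?_⟩
  rw [Fintype.sum_eq_apply_iff_of_nonpos hterm_nonpos]
  simp only [term, div_eq_zero_iff, (hpos _).ne', or_false]

/-- Lemma 1: let A be the span of an orthogonal family P_0 = I, P_1, ..., P_d, and let
M, N be PSD matrices with ⟨M,P_i⟩⟨P_i,N⟩ ≤ 0 for all i ≠ 0.  Then
⟨M',N'⟩ ≤ (tr M)(tr N)/n, with equality iff ⟨M,P_i⟩⟨P_i,N⟩ = 0 for all i ≠ 0. -/
theorem proj_inner_le {n d : ℕ} (hn : 0 < n)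
    (P : Fin (d + 1) → Matrix (Fin n) (Fin n) ℂ)
    (hP0 : P 0 = 1)
    (hPnz : ∀ i, P i ≠ 0)
    (horth : ∀ i j, i ≠ j → Matrix.trace (P i * (P j)ᴴ) = 0)
    (M N M' N' : Matrix (Fin n) (Fin n) ℂ)
    (hM : M.PosSemidef) (hN : N.PosSemidef)
    (hM' : M' ∈ Submodule.span ℂ (Set.range P))
    (hN' : N' ∈ Submodule.span ℂ (Set.range P))
    (hMproj : ∀ i, Matrix.trace ((M - M') * (P i)ᴴ) = 0)
    (hNproj : ∀ i, Matrix.trace ((N - N') * (P i)ᴴ) = 0)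
    (hneg : ∀ i, i ≠ 0 → Matrix.trace (M * (P i)ᴴ) * Matrix.trace (P i * Nᴴ) ≤ 0) :
    Matrix.trace (M' * N'ᴴ) ≤ Matrix.trace M * Matrix.trace N / n ∧
    (Matrix.trace (M' * N'ᴴ) = Matrix.trace M * Matrix.trace N / n ↔
      ∀ i, i ≠ 0 → Matrix.trace (M * (P i)ᴴ) * Matrix.trace (P i * Nᴴ) = 0) :=
  proj_inner_le_general P hP0 hPnz horth M N M' N' hN hN' hMproj hNproj hneg
end

section
/- Let A be a homogeneous matrix *-algebra containing I and J, and let M, N be positive semidefinite n×n matrices with projections M', N' onto A. Then ⟨M', N'⟩ ≥ (tr JM)(tr JN)/n², with equality if and only if M'N' is a scalar multiple of J. -/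
/-
Put `E = J / n` and `K = 1 - E`. Homogeneity forces the row and column sums of every `B ∈ A`
to be constant, so `E` is a central projection of `A` with `E B = B E = tr (E B) • E`. Hence
`B = K B K + tr (E B) • E` for `B ∈ A`, and
`M' N' = (K M' K) (K N' K) + tr (E M) tr (E N) • E`.
Orthogonal projection onto `A` commutes with the compression `X ↦ K X K`, as `K ∈ A`, so
`K M' K` is the projection of the positive matrix `K M K`. The projection of a positive matrix
onto a unital *-algebra is positive: the negative part `Q` of `M'` is a continuous function of
`M'`, so `Q ∈ A`, and `0 ≤ tr (M Q) = tr (M' Q) = - tr (Q²)` forces `Q = 0`. Finally, the trace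
of a product of two positive matrices is nonnegative and vanishes only when the product does;
for `K M' K` and `K N' K` this gives the inequality, with equality iff `M' N' ∈ ℂ J`.
-/

open Matrix
open scoped ComplexOrder

section IdempotentDecomposition
variable {K R : Type*} [CommRing K] [Ring R] [Algebra K R] {e a b : R} {c d : K}

theorem IsIdempotentElem.one_sub_mul_mul_one_sub (he : IsIdempotentElem e) (hea : e * a = c • e)
    (hae : a * e = c • e) : (1 - e) * a * (1 - e) = a - c • e := by
  have : e * a * e = c • e := by rw [hea, smul_mul_assoc, he.eq]
  calc (1 - e) * a * (1 - e) = a - e * a - a * e + e * a * e := by noncomm_ring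
    _ = a - c • e := by rw [this, hae, hea]; abel

theorem IsIdempotentElem.mul_eq_add_smul (he : IsIdempotentElem e) (hea : e * a = c • e)
    (hae : a * e = c • e) (heb : e * b = d • e) (hbe : b * e = d • e) :
    a * b = (1 - e) * a * (1 - e) * ((1 - e) * b * (1 - e)) + (c * d) • e := by
  rw [he.one_sub_mul_mul_one_sub hea hae, he.one_sub_mul_mul_one_sub heb hbe]
  simp [sub_mul, mul_sub, hae, heb, he.eq, smul_smul]

theorem IsIdempotentElem.exists_mul_eq_smul_iff (he : IsIdempotentElem e) (hea : e * a = c • e)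
    (hae : a * e = c • e) (heb : e * b = d • e) (hbe : b * e = d • e) :
    (∃ c' : K, a * b = c' • e) ↔ (1 - e) * a * (1 - e) * ((1 - e) * b * (1 - e)) = 0 := by
  rw [he.mul_eq_add_smul hea hae heb hbe]
  refine ⟨fun ⟨c', h⟩ => ?_, fun h => ⟨c * d, by rw [h, zero_add]⟩⟩
  have hxe : (1 - e) * a * (1 - e) * ((1 - e) * b * (1 - e)) * e = 0 := by
    rw [mul_assoc _ _ e, mul_assoc _ (1 - e) e, he.one_sub_mul_self, mul_zero, mul_zero]
  rw [← eq_sub_iff_add_eq, ← sub_smul] at h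
  rw [h, smul_mul_assoc, he.eq, ← h] at hxe
  exact hxe

end IdempotentDecomposition

def Submodule.toStarSubalgebra {R A : Type*} [CommSemiring R] [StarRing R] [Semiring A]
    [StarRing A] [Algebra R A] [StarModule R A] (p : Submodule R A) (h_one : (1 : A) ∈ p)
    (h_mul : ∀ x ∈ p, ∀ y ∈ p, x * y ∈ p) (h_star : ∀ x ∈ p, star x ∈ p) :
    StarSubalgebra R A :=
  { p.toSubalgebra h_one (fun x y hx hy => h_mul x hx y hy) with star_mem' := h_star _ }

namespace Matrix

section
variable {m 𝕜 : Type*} [Fintype m] [RCLike 𝕜]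

section PosSemidef
variable {X Y : Matrix m m 𝕜}

open scoped MatrixOrder in
theorem PosSemidef.exists_eq_conjTranspose_mul_self (hX : X.PosSemidef) :
    ∃ B : Matrix m m 𝕜, X = Bᴴ * B := by
  classical
  exact CStarAlgebra.nonneg_iff_eq_star_mul_self.mp hX.nonneg

theorem PosSemidef.trace_mul_nonneg (hX : X.PosSemidef) (hY : Y.PosSemidef) :
    0 ≤ (X * Y).trace := by
  obtain ⟨B, rfl⟩ := hX.exists_eq_conjTranspose_mul_self
  rw [Matrix.mul_assoc, trace_mul_comm, Matrix.mul_assoc, ← Matrix.mul_assoc]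
  exact (hY.mul_mul_conjTranspose_same B).trace_nonneg

theorem PosSemidef.trace_mul_eq_zero_iff (hX : X.PosSemidef) (hY : Y.PosSemidef) :
    (X * Y).trace = 0 ↔ X * Y = 0 := by
  refine ⟨fun h => ?_, fun h => by rw [h, trace_zero]⟩
  obtain ⟨B, rfl⟩ := hX.exists_eq_conjTranspose_mul_self
  obtain ⟨C, rfl⟩ := hY.exists_eq_conjTranspose_mul_self
  have hCB : C * Bᴴ = 0 := by
    rw [← trace_conjTranspose_mul_self_eq_zero_iff, ← h, conjTranspose_mul,
      conjTranspose_conjTranspose, Matrix.mul_assoc, trace_mul_comm]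
    simp only [Matrix.mul_assoc]
    rw [← Matrix.mul_assoc Cᴴ, trace_mul_comm, Matrix.mul_assoc]
  calc Bᴴ * B * (Cᴴ * C) = Bᴴ * (C * Bᴴ)ᴴ * C := by
        simp only [conjTranspose_mul, conjTranspose_conjTranspose, Matrix.mul_assoc]
    _ = 0 := by rw [hCB, conjTranspose_zero, Matrix.mul_zero, Matrix.zero_mul]

end PosSemidef

def IsOrthogonalProjection {σ : Type*} [SetLike σ (Matrix m m 𝕜)] (S : σ)
    (M M' : Matrix m m 𝕜) : Prop :=
  M' ∈ S ∧ ∀ P ∈ S, ((M - M') * Pᴴ).trace = 0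

namespace IsOrthogonalProjection
variable {σ : Type*} [SetLike σ (Matrix m m 𝕜)] {S : σ} {M M' : Matrix m m 𝕜}

theorem trace_mul_conjTranspose_eq (h : IsOrthogonalProjection S M M') {P : Matrix m m 𝕜}
    (hP : P ∈ S) : (M * Pᴴ).trace = (M' * Pᴴ).trace := by
  rw [← sub_eq_zero, ← trace_sub, ← Matrix.sub_mul]
  exact h.2 P hP

theorem unique [AddSubgroupClass σ (Matrix m m 𝕜)] {M'' : Matrix m m 𝕜}
    (h' : IsOrthogonalProjection S M M') (h'' : IsOrthogonalProjection S M M'') : M' = M'' := by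
  have hD : M' - M'' ∈ S := sub_mem h'.1 h''.1
  rw [← sub_eq_zero, ← trace_mul_conjTranspose_self_eq_zero_iff, Matrix.sub_mul, trace_sub,
    ← h'.trace_mul_conjTranspose_eq hD, ← h''.trace_mul_conjTranspose_eq hD, sub_self]

theorem conjTranspose [StarMemClass σ (Matrix m m 𝕜)] (h : IsOrthogonalProjection S M M') :
    IsOrthogonalProjection S Mᴴ M'ᴴ := by
  refine ⟨star_mem h.1, fun P hP => ?_⟩
  have := h.2 Pᴴ (star_mem hP)
  rw [conjTranspose_conjTranspose, trace_mul_comm] at this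
  rw [← conjTranspose_sub, ← conjTranspose_mul, trace_conjTranspose, this, star_zero]

theorem isHermitian [AddSubgroupClass σ (Matrix m m 𝕜)] [StarMemClass σ (Matrix m m 𝕜)]
    (h : IsOrthogonalProjection S M M') (hM : M.IsHermitian) : M'.IsHermitian :=
  (h.unique (hM.eq ▸ h.conjTranspose)).symm

theorem mul_mul_conjTranspose_same [AddSubgroupClass σ (Matrix m m 𝕜)]
    [MulMemClass σ (Matrix m m 𝕜)] [StarMemClass σ (Matrix m m 𝕜)] {K : Matrix m m 𝕜} (hK : K ∈ S)
    (h : IsOrthogonalProjection S M M') :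
    IsOrthogonalProjection S (K * M * Kᴴ) (K * M' * Kᴴ) := by
  refine ⟨mul_mem (mul_mem hK h.1) (star_mem hK), fun P hP => ?_⟩
  have := h.2 (Kᴴ * P * K) (mul_mem (mul_mem (star_mem hK) hP) hK)
  rw [← this, ← Matrix.sub_mul, ← Matrix.mul_sub]
  simp only [conjTranspose_mul, conjTranspose_conjTranspose, Matrix.mul_assoc]
  rw [trace_mul_comm K]
  simp only [Matrix.mul_assoc]

open scoped MatrixOrder in
theorem posSemidef [DecidableEq m] {S : StarSubalgebra 𝕜 (Matrix m m 𝕜)}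
    (h : IsOrthogonalProjection S M M') (hM : M.PosSemidef) : M'.PosSemidef := by
  have hM' : IsSelfAdjoint M' := (h.isHermitian hM.isHermitian).isSelfAdjoint
  have : IsClosed (S : Set (Matrix m m 𝕜)) :=
    S.toSubalgebra.toSubmodule.closed_of_finiteDimensional
  -- `Q` is the negative part of `M'`; being a continuous function of `M'`, it lies in `S`.
  set Q := cfc (fun x : ℝ => max (-x) 0) M' with hQdef
  have hQ : Q.PosSemidef := (cfc_nonneg fun x _ => le_max_right _ _).posSemidef
  have hM'Q : M' * Q = -(Q * Q) := by
    calc M' * Q = cfc (fun x : ℝ => x * max (-x) 0) M' := by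
          rw [cfc_mul (fun x : ℝ => x) _ M', cfc_id' ℝ M']
      _ = cfc (fun x : ℝ => -(max (-x) 0 * max (-x) 0)) M' := by
          refine cfc_congr fun x _ => ?_
          rcases le_total x 0 with hx | hx
          · simp [max_eq_left (neg_nonneg.mpr hx)]
          · simp [max_eq_right (neg_nonpos.mpr hx)]
      _ = -(Q * Q) := by rw [cfc_neg, cfc_mul (fun x : ℝ => max (-x) 0) _ M']
  have hQQ : (Q * Q).trace = 0 := by
    refine le_antisymm ?_ (hQ.trace_mul_nonneg hQ)
    have hMQ := hM.trace_mul_nonneg hQ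
    rwa [← hQ.isHermitian.eq, h.trace_mul_conjTranspose_eq (cfc_mem _ h.1), hQ.isHermitian.eq,
      hM'Q, trace_neg, neg_nonneg] at hMQ
  have hQ0 : Q = 0 := trace_mul_conjTranspose_self_eq_zero_iff.mp (by rwa [hQ.isHermitian.eq])
  have hpos : cfc (fun x : ℝ => max x 0) M' = M' := by
    rw [← sub_zero (cfc _ M'), ← hQ0, hQdef, ← cfc_sub (fun x : ℝ => max x 0) _ M']
    exact (cfc_congr fun x _ => max_zero_sub_max_neg_zero_eq_self x).trans (cfc_id' ℝ M')
  rw [← hpos]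
  exact (cfc_nonneg fun x _ => le_max_right _ _).posSemidef

end IsOrthogonalProjection

section CentralProjection
variable [DecidableEq m] {S : StarSubalgebra 𝕜 (Matrix m m 𝕜)} {E M N M' N' : Matrix m m 𝕜}

theorem trace_proj_mul_proj_ge (hE : IsStarProjection E) (hES : E ∈ S)
    (hcentral : ∀ B ∈ S, E * B = (E * B).trace • E ∧ B * E = (E * B).trace • E)
    (hM : M.PosSemidef) (hN : N.PosSemidef)
    (hM' : IsOrthogonalProjection S M M') (hN' : IsOrthogonalProjection S N N') :
    (E * M).trace * (E * N).trace * E.trace ≤ (M' * N'ᴴ).trace ∧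
      ((M' * N'ᴴ).trace = (E * M).trace * (E * N).trace * E.trace ↔
        ∃ c : 𝕜, M' * N' = c • E) := by
  have hK : (1 - E)ᴴ = 1 - E := hE.one_sub.isSelfAdjoint
  have hKS : 1 - E ∈ S := sub_mem (one_mem S) hES
  have hX := (hM'.mul_mul_conjTranspose_same hKS).posSemidef
    (hM.mul_mul_conjTranspose_same (1 - E))
  have hY := (hN'.mul_mul_conjTranspose_same hKS).posSemidef
    (hN.mul_mul_conjTranspose_same (1 - E))
  rw [hK] at hX hY
  have hEh : Eᴴ = E := hE.isSelfAdjoint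
  have htrE : ∀ {B B'}, IsOrthogonalProjection S B B' → (E * B').trace = (E * B).trace :=
    fun h => by rw [trace_mul_comm, trace_mul_comm E, ← hEh, h.trace_mul_conjTranspose_eq hES]
  obtain ⟨hEM', hM'E⟩ := hcentral M' hM'.1
  obtain ⟨hEN', hN'E⟩ := hcentral N' hN'.1
  have htrace : (M' * N'ᴴ).trace = ((1 - E) * M' * (1 - E) * ((1 - E) * N' * (1 - E))).trace +
      (E * M).trace * (E * N).trace * E.trace := by
    rw [(hN'.isHermitian hN.isHermitian).eq,
      hE.isIdempotentElem.mul_eq_add_smul hEM' hM'E hEN' hN'E, trace_add, trace_smul,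
      smul_eq_mul, htrE hM', htrE hN']
  rw [htrace, add_eq_right, hX.trace_mul_eq_zero_iff hY,
    hE.isIdempotentElem.exists_mul_eq_smul_iff hEM' hM'E hEN' hN'E]
  exact ⟨le_add_of_nonneg_left (hX.trace_mul_nonneg hY), Iff.rfl⟩

end CentralProjection

end

section AllOnes
variable {m α : Type*} [Fintype m] [Field α]

-- `J / n`, the projection onto the constant vectors; it is `0` when `n = 0` in `α`.
variable (m α) in
def allOnesProj : Matrix m m α := (Fintype.card m : α)⁻¹ • of fun _ _ => 1

theorem isStarProjection_allOnesProj [StarRing α] : IsStarProjection (allOnesProj m α) := by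
  constructor
  · rcases eq_or_ne (Fintype.card m : α) 0 with h | h
    · simp [IsIdempotentElem, allOnesProj, h]
    · ext i j
      simp [allOnesProj, mul_apply]
      field_simp
  · ext i j
    simp [allOnesProj, star_inv₀]

theorem allOnesProj_mul_eq_trace_smul {B : Matrix m m α}
    (hrow : ∀ i j, ∑ k, B i k = ∑ k, B j k) (hcol : ∀ i j, ∑ k, B k i = ∑ k, B k j) :
    allOnesProj m α * B = (allOnesProj m α * B).trace • allOnesProj m α ∧
      B * allOnesProj m α = (allOnesProj m α * B).trace • allOnesProj m α := by
  rcases eq_or_ne (Fintype.card m : α) 0 with h | h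
  · simp [allOnesProj, h]
  obtain ⟨c, hc⟩ : ∃ c, ∑ l, ∑ k, B k l = c := ⟨_, rfl⟩
  have hcol' : ∀ j, ∑ k, B k j = (Fintype.card m : α)⁻¹ * c := fun j => by
    rw [eq_inv_mul_iff_mul_eq₀ h, ← hc]
    simp [Finset.sum_congr rfl fun l _ => hcol l j]
  have hrow' : ∀ i, ∑ k, B i k = (Fintype.card m : α)⁻¹ * c := fun i => by
    rw [eq_inv_mul_iff_mul_eq₀ h, ← hc, Finset.sum_comm]
    simp [Finset.sum_congr rfl fun l _ => hrow l i]
  constructor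
  · ext i j
    simp [allOnesProj, mul_apply, trace, ← Finset.mul_sum, hcol', mul_inv_cancel_left₀ h]
    ring
  · ext i j
    simp [allOnesProj, mul_apply, trace, ← Finset.mul_sum, ← Finset.sum_mul, hcol', hrow',
      mul_inv_cancel_left₀ h]

theorem allOnesProj_mul_eq_trace_smul_of_homogeneous {σ : Type*} [SetLike σ (Matrix m m α)]
    [MulMemClass σ (Matrix m m α)] {S : σ} (hJ : (of fun _ _ => 1 : Matrix m m α) ∈ S)
    (hhom : ∀ B ∈ S, ∀ i j, B i i = B j j) {B : Matrix m m α} (hB : B ∈ S) :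
    allOnesProj m α * B = (allOnesProj m α * B).trace • allOnesProj m α ∧
      B * allOnesProj m α = (allOnesProj m α * B).trace • allOnesProj m α :=
  allOnesProj_mul_eq_trace_smul
    (fun i j => by simpa [mul_apply] using hhom _ (mul_mem hB hJ) i j)
    (fun i j => by simpa [mul_apply] using hhom _ (mul_mem hJ hB) i j)

theorem trace_allOnesProj_mul (B : Matrix m m α) :
    (allOnesProj m α * B).trace = (Fintype.card m : α)⁻¹ * ((of fun _ _ => 1) * B).trace := by
  rw [allOnesProj, smul_mul, trace_smul, smul_eq_mul]

theorem trace_allOnesProj :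
    (allOnesProj m α).trace = (Fintype.card m : α)⁻¹ * Fintype.card m := by
  rw [allOnesProj, trace_smul, smul_eq_mul]
  simp [trace]

theorem exists_eq_smul_allOnesProj_iff [CharZero α] {P : Matrix m m α} :
    (∃ c : α, P = c • allOnesProj m α) ↔ ∃ c : α, P = c • of fun _ _ => 1 := by
  refine ⟨fun ⟨c, hc⟩ => ⟨c * (Fintype.card m : α)⁻¹, by rw [hc, allOnesProj, smul_smul]⟩,
    fun ⟨c, hc⟩ => ?_⟩
  rcases isEmpty_or_nonempty m with hm | hm
  · exact ⟨0, Subsingleton.elim _ _⟩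
  refine ⟨c * Fintype.card m, ?_⟩
  rw [hc, allOnesProj, smul_smul, mul_assoc, mul_inv_cancel₀ (by simp), mul_one]

end AllOnes

end Matrix

/-- Lemma 2: if A is a homogeneous matrix *-algebra containing I and J, and M, N are
PSD matrices with projections M', N' onto A, then ⟨M',N'⟩ ≥ (tr JM)(tr JN)/n²,
with equality iff M'N' is a scalar multiple of J. -/
theorem proj_inner_ge {n : ℕ}
    (A : Submodule ℂ (Matrix (Fin n) (Fin n) ℂ))
    (hmul : ∀ M ∈ A, ∀ N ∈ A, M * N ∈ A)
    (hstar : ∀ M ∈ A, Mᴴ ∈ A)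
    (hhom : ∀ M ∈ A, ∀ i j : Fin n, M i i = M j j)
    (hI : (1 : Matrix (Fin n) (Fin n) ℂ) ∈ A)
    (hJ : (Matrix.of fun _ _ => (1 : ℂ) : Matrix (Fin n) (Fin n) ℂ) ∈ A)
    (M N M' N' : Matrix (Fin n) (Fin n) ℂ)
    (hM : M.PosSemidef) (hN : N.PosSemidef)
    (hM' : M' ∈ A) (hN' : N' ∈ A)
    (hMproj : ∀ P ∈ A, Matrix.trace ((M - M') * Pᴴ) = 0)
    (hNproj : ∀ P ∈ A, Matrix.trace ((N - N') * Pᴴ) = 0) :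
    Matrix.trace ((Matrix.of fun _ _ => (1 : ℂ)) * M) *
        Matrix.trace ((Matrix.of fun _ _ => (1 : ℂ)) * N) / (n ^ 2 : ℂ) ≤
      Matrix.trace (M' * N'ᴴ) ∧
    (Matrix.trace (M' * N'ᴴ) =
        Matrix.trace ((Matrix.of fun _ _ => (1 : ℂ)) * M) *
          Matrix.trace ((Matrix.of fun _ _ => (1 : ℂ)) * N) / (n ^ 2 : ℂ) ↔
      ∃ c : ℂ, M' * N' = c • (Matrix.of fun _ _ => (1 : ℂ))) := by
  let S := A.toStarSubalgebra hI hmul hstar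
  have key := trace_proj_mul_proj_ge (S := S) isStarProjection_allOnesProj (A.smul_mem _ hJ)
    (fun _ hB => allOnesProj_mul_eq_trace_smul_of_homogeneous (S := S) hJ hhom hB)
    hM hN ⟨hM', hMproj⟩ ⟨hN', hNproj⟩
  have hval : (allOnesProj (Fin n) ℂ * M).trace * (allOnesProj (Fin n) ℂ * N).trace *
      (allOnesProj (Fin n) ℂ).trace =
        ((of fun _ _ => 1) * M).trace * ((of fun _ _ => 1) * N).trace / (n ^ 2 : ℂ) := by
    rw [trace_allOnesProj_mul, trace_allOnesProj_mul, trace_allOnesProj, Fintype.card_fin]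
    rcases eq_or_ne (n : ℂ) 0 with h | h
    · simp [h]
    · field_simp
  rwa [hval, exists_eq_smul_allOnesProj_iff] at key
end

section
/- Let G be a graph on n vertices belonging to a homogeneous coherent configuration {I = A_0, ..., A_d} (i.e., the adjacency matrix of G is a sum of some of the A_r for r ≥ 1), with G connected. Let M and N be nonzero positive semidefinite matrices with M ∘ A = 0 and N ∘ (J − I − A) = 0, where A is the adjacency matrix of G and ∘ denotes entrywise product. Then n ≥ (tr JM)(tr JN)/((tr M)(tr N)). -/
/-!
Average `M` and `N` over the classes of the configuration. This is the orthogonal projection onto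
the coherent algebra `𝒜 = span {A_r}` for the pairing `∑ i j, X i j * Y i j`, so it leaves
`tr (X * C)` unchanged for `C ∈ 𝒜`. As a finite-dimensional, hence closed, star subalgebra, `𝒜`
contains the negative part `P⁻` of the projection `P` of `M`; hence
`-tr (P⁻ * P⁻) = tr (P * P⁻) = tr (M * P⁻) ≥ 0`, so `P⁻ = 0` and `P` is positive semidefinite, as
is the projection `Q` of `N`. Off the diagonal the zero patterns of `M` and `N` are complementary,
so only the class `A_0 = 1` contributes to `tr (P * Qᵀ) = tr (M * Qᵀ) = tr M * tr N / n`.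
Finally, elements of `𝒜` have constant diagonal, so the all-ones vector is an eigenvector of `P`;
then `(n • 1 - J) * P * (n • 1 - J)` is positive semidefinite, and pairing it with `Qᵀ` gives
`tr (J * M) * tr (J * N) ≤ n ^ 2 * tr (P * Qᵀ)`.
-/

open Matrix
open scoped ComplexOrder

local notation "𝐉" => Matrix.of fun _ _ => (1 : ℂ)

section PosSemidef

variable {ι : Type*} [Fintype ι]

theorem Matrix.PosSemidef.trace_pos {X : Matrix ι ι ℂ} (hX : X.PosSemidef) (hX0 : X ≠ 0) :
    0 < X.trace :=
  hX.trace_nonneg.lt_of_ne (Ne.symm (hX.trace_eq_zero_iff.not.mpr hX0))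

variable [DecidableEq ι]

open scoped MatrixOrder in
theorem Matrix.PosSemidef.trace_mul_nonneg_s9 {X C : Matrix ι ι ℂ} (hX : X.PosSemidef)
    (hC : C.PosSemidef) : 0 ≤ (X * C).trace := by
  have hsq : CFC.sqrt X * CFC.sqrt X = X := CFC.sqrt_mul_sqrt_self X hX.nonneg
  have hherm : (CFC.sqrt X)ᴴ = CFC.sqrt X := (CFC.sqrt_nonneg X).posSemidef.isHermitian
  rw [← hsq, Matrix.mul_assoc, trace_mul_comm, Matrix.mul_assoc]
  simpa [hherm, Matrix.mul_assoc] using (hC.conjTranspose_mul_mul_same (CFC.sqrt X)).trace_nonneg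

theorem isHermitian_of_forall_trace_mul_eq {S : StarSubalgebra ℂ (Matrix ι ι ℂ)}
    {B X : Matrix ι ι ℂ} (hB : B ∈ S) (hX : X.IsHermitian)
    (h : ∀ C ∈ S, (B * C).trace = (X * C).trace) : B.IsHermitian := by
  -- `Bᴴ` satisfies the same trace identities, so `Bᴴ - B ∈ S` pairs to zero with its adjoint.
  have hstar : ∀ C ∈ S, (Bᴴ * C).trace = (B * C).trace := fun C hC => by
    have hC' : Cᴴ ∈ S := star_mem hC
    rw [← star_star (Bᴴ * C).trace, ← trace_conjTranspose, conjTranspose_mul,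
      conjTranspose_conjTranspose, trace_mul_comm, h _ hC', trace_mul_comm,
      ← conjTranspose_conjTranspose X, ← conjTranspose_mul, trace_conjTranspose, star_star,
      hX.eq, h _ hC]
  have hD : (Bᴴ - B)ᴴ ∈ S := star_mem (sub_mem (star_mem hB) hB)
  have : ((Bᴴ - B) * (Bᴴ - B)ᴴ).trace = 0 := by
    rw [sub_mul, trace_sub, hstar _ hD, sub_self]
  exact sub_eq_zero.mp (trace_mul_conjTranspose_self_eq_zero_iff.mp this)

open scoped MatrixOrder in
theorem posSemidef_of_forall_trace_mul_nonneg {S : StarSubalgebra ℂ (Matrix ι ι ℂ)}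
    {B : Matrix ι ι ℂ} (hBS : B ∈ S) (hB : B.IsHermitian)
    (h : ∀ C ∈ S, C.PosSemidef → 0 ≤ (B * C).trace) : B.PosSemidef := by
  have hS : IsClosed (S : Set (Matrix ι ι ℂ)) :=
    (Subalgebra.toSubmodule S.toSubalgebra).closed_of_finiteDimensional
  have hneg : B⁻ ∈ S := by
    rw [CFC.negPart_def, cfcₙ_eq_cfc]
    exact cfc_mem _ hBS
  have hnegH : (B⁻)ᴴ = B⁻ := (CFC.negPart_nonneg B).posSemidef.isHermitian
  have hBB : B * B⁻ = -(B⁻ * (B⁻)ᴴ) := by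
    calc B * B⁻ = (B⁺ - B⁻) * B⁻ := by rw [CFC.posPart_sub_negPart B hB.isSelfAdjoint]
      _ = -(B⁻ * (B⁻)ᴴ) := by rw [hnegH, sub_mul, CFC.posPart_mul_negPart, zero_sub]
  have h1 := h _ hneg (CFC.negPart_nonneg B).posSemidef
  rw [hBB, trace_neg, neg_nonneg] at h1
  have h0 : B⁻ = 0 := trace_mul_conjTranspose_self_eq_zero_iff.mp
    (le_antisymm h1 (posSemidef_self_mul_conjTranspose _).trace_nonneg)
  exact ((CFC.negPart_eq_zero_iff B hB.isSelfAdjoint).mp h0).posSemidef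

theorem posSemidef_of_forall_trace_mul_eq {S : StarSubalgebra ℂ (Matrix ι ι ℂ)}
    {B X : Matrix ι ι ℂ} (hBS : B ∈ S) (hX : X.PosSemidef)
    (h : ∀ C ∈ S, (B * C).trace = (X * C).trace) : B.PosSemidef :=
  posSemidef_of_forall_trace_mul_nonneg hBS (isHermitian_of_forall_trace_mul_eq hBS hX.1 h)
    fun C hC hCpsd => h C hC ▸ hX.trace_mul_nonneg_s9 hCpsd

end PosSemidef

theorem allOnes_transpose {ι : Type*} : (𝐉 : Matrix ι ι ℂ)ᵀ = 𝐉 := rfl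

section AllOnes

variable {ι : Type*} [Fintype ι]

theorem allOnes_mul_allOnes : (𝐉 * 𝐉 : Matrix ι ι ℂ) = (Fintype.card ι : ℂ) • 𝐉 := by
  ext i j
  simp [mul_apply]

theorem trace_allOnes : (𝐉 : Matrix ι ι ℂ).trace = Fintype.card ι := by
  simp [trace]

theorem eq_trace_div_card_smul_allOnes {Y : Matrix ι ι ℂ} (hrow : ∀ i j, Y i j = Y i i)
    (hdiag : ∀ i j, Y i i = Y j j) : Y = (Y.trace / Fintype.card ι) • 𝐉 := by
  ext i j
  have : Nonempty ι := ⟨i⟩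
  have hn : (Fintype.card ι : ℂ) ≠ 0 := Nat.cast_ne_zero.mpr Fintype.card_ne_zero
  have htr : Y.trace = Fintype.card ι * Y i i := by
    simp [trace, hdiag _ i]
  simp [hrow i j, htr, hn]

theorem trace_allOnes_mul_mul_trace_allOnes_mul_le [DecidableEq ι] {P Q : Matrix ι ι ℂ}
    {c : ℂ} (hP : P.PosSemidef) (hQ : Q.PosSemidef) (hPJ : P * 𝐉 = c • 𝐉) (hJP : 𝐉 * P = c • 𝐉) :
    (𝐉 * P).trace * (𝐉 * Q).trace ≤ (Fintype.card ι : ℂ) ^ 2 * (P * Q).trace := by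
  set n : ℂ := (Fintype.card ι : ℂ)
  set K : Matrix ι ι ℂ := n • 1 - 𝐉
  have hK : Kᴴ = K := by
    rw [conjTranspose_sub, conjTranspose_smul, conjTranspose_one, star_natCast]
    congr 1
    ext
    simp
  have hKP : K * P = n • P - c • 𝐉 := by rw [sub_mul, smul_mul, Matrix.one_mul, hJP]
  have hKPK : Kᴴ * P * K = n ^ 2 • P - (n * c) • 𝐉 := by
    rw [hK, hKP]
    simp only [K, Matrix.mul_sub, Matrix.sub_mul, Matrix.smul_mul, Matrix.mul_smul,
      Matrix.mul_one, hPJ, allOnes_mul_allOnes]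
    module
  have h := (hP.conjTranspose_mul_mul_same K).trace_mul_nonneg_s9 hQ
  rw [hKPK, sub_mul, trace_sub, smul_mul, smul_mul, trace_smul, trace_smul, smul_eq_mul,
    smul_eq_mul, sub_nonneg] at h
  calc (𝐉 * P).trace * (𝐉 * Q).trace = n * c * (𝐉 * Q).trace := by
        rw [hJP, trace_smul, trace_allOnes, smul_eq_mul, mul_comm c]
    _ ≤ n ^ 2 * (P * Q).trace := h

end AllOnes

theorem trace_mul_transpose_eq_zero_of_hadamard_eq_zero {ι : Type*} [Fintype ι]
    {X E B : Matrix ι ι ℂ} (hXE : X ⊙ E = 0) (hEB : E ⊙ B = B) : (X * Bᵀ).trace = 0 := by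
  rw [← sum_hadamard_eq, ← hEB, ← hadamard_assoc, hXE, zero_hadamard]
  simp

section Partition

variable {ι κ : Type*} [Fintype κ]

structure IsZeroOnePartition (A : κ → Matrix ι ι ℂ) : Prop where
  zero_or_one : ∀ r i j, A r i j = 0 ∨ A r i j = 1
  sum_eq : ∑ r, A r = 𝐉

namespace IsZeroOnePartition

variable {A : κ → Matrix ι ι ℂ}

theorem hadamard_eq_ite [DecidableEq κ] (hA : IsZeroOnePartition A) (r s : κ) :
    A r ⊙ A s = if r = s then A r else 0 := by
  ext i j
  split_ifs with hrs
  · subst hrs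
    rcases hA.zero_or_one r i j with h | h <;> simp [h]
  · have hsum : ∑ t, A t i j = 1 := by
      simpa [Matrix.sum_apply] using congrFun (congrFun hA.sum_eq i) j
    have hnn : ∀ t, 0 ≤ A t i j := fun t => by rcases hA.zero_or_one t i j with h | h <;> simp [h]
    have hle : A r i j + A s i j ≤ 1 := by
      rw [← hsum, ← Finset.add_sum_erase _ _ (Finset.mem_univ r)]
      gcongr
      exact Finset.single_le_sum (fun t _ => hnn t)
        (Finset.mem_erase.mpr ⟨Ne.symm hrs, Finset.mem_univ s⟩)
    rcases hA.zero_or_one r i j with h | h <;> rcases hA.zero_or_one s i j with h' | h' <;>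
      simp_all
    exact (zero_lt_one.trans_le hle).false

theorem sum_hadamard_eq_ite [DecidableEq κ] (hA : IsZeroOnePartition A) (T : Finset κ) (r : κ) :
    (∑ s ∈ T, A s) ⊙ A r = if r ∈ T then A r else 0 := by
  have : (∑ s ∈ T, A s) ⊙ A r = ∑ s ∈ T, A s ⊙ A r := by
    ext i j
    simp [Matrix.sum_apply, Finset.sum_mul]
  rw [this]
  simp_rw [hA.hadamard_eq_ite, Finset.sum_ite_eq']

theorem conjTranspose_eq_transpose (hA : IsZeroOnePartition A) (r : κ) : (A r)ᴴ = (A r)ᵀ := by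
  ext i j
  rcases hA.zero_or_one r j i with h | h <;> simp [h]

theorem star_mem_span (hA : IsZeroOnePartition A)
    (htrans : ∀ r, ∃ s, (A r)ᵀ = A s) {x : Matrix ι ι ℂ}
    (hx : x ∈ Submodule.span ℂ (Set.range A)) : star x ∈ Submodule.span ℂ (Set.range A) := by
  induction hx using Submodule.span_induction with
  | mem y hy =>
    obtain ⟨r, rfl⟩ := hy
    obtain ⟨s, hs⟩ := htrans r
    rw [star_eq_conjTranspose, hA.conjTranspose_eq_transpose, hs]
    exact Submodule.subset_span ⟨s, rfl⟩
  | zero => simp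
  | add y z _ _ hy hz => simpa using add_mem hy hz
  | smul c y _ hy => simpa using Submodule.smul_mem _ (star c) hy

theorem trace_mul_transpose_eq_ite [Fintype ι] [DecidableEq κ] (hA : IsZeroOnePartition A)
    (r s : κ) : (A r * (A s)ᵀ).trace = if r = s then (A s * (A s)ᵀ).trace else 0 := by
  split_ifs with h
  · rw [h]
  · rw [← sum_hadamard_eq, hA.hadamard_eq_ite, if_neg h]
    simp

end IsZeroOnePartition

/-- The orthogonal projection onto the span of the classes for the pairing
`tr (X * Yᵀ) = ∑ i j, X i j * Y i j`: on each class it averages the entries of `X`. -/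
noncomputable def classProj [Fintype ι] (A : κ → Matrix ι ι ℂ) (X : Matrix ι ι ℂ) :
    Matrix ι ι ℂ :=
  ∑ r, ((X * (A r)ᵀ).trace / (A r * (A r)ᵀ).trace) • A r

variable [Fintype ι] {A : κ → Matrix ι ι ℂ}

theorem classProj_mem_span (X : Matrix ι ι ℂ) :
    classProj A X ∈ Submodule.span ℂ (Set.range A) :=
  Submodule.sum_mem _ fun r _ => Submodule.smul_mem _ _ (Submodule.subset_span ⟨r, rfl⟩)

theorem trace_mul_transpose_classProj (X Y : Matrix ι ι ℂ) :
    (X * (classProj A Y)ᵀ).trace =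
      ∑ r, (Y * (A r)ᵀ).trace / (A r * (A r)ᵀ).trace * (X * (A r)ᵀ).trace := by
  simp [classProj, transpose_sum, Matrix.mul_sum, trace_sum]

theorem IsZeroOnePartition.trace_classProj_mul_transpose [DecidableEq κ] (hA : IsZeroOnePartition A)
    (X : Matrix ι ι ℂ) (t : κ) : (classProj A X * (A t)ᵀ).trace = (X * (A t)ᵀ).trace := by
  simp only [classProj, Matrix.sum_mul, trace_sum, Matrix.smul_mul, trace_smul, smul_eq_mul]
  rw [Finset.sum_eq_single t (fun r _ hr => by rw [hA.trace_mul_transpose_eq_ite r t, if_neg hr,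
    mul_zero]) (by simp)]
  by_cases h : (A t * (A t)ᵀ).trace = 0
  · rw [← hA.conjTranspose_eq_transpose, trace_mul_conjTranspose_self_eq_zero_iff] at h
    simp [h]
  · exact div_mul_cancel₀ _ h

end Partition

theorem transpose_mem_span {ι κ : Type*} {A : κ → Matrix ι ι ℂ} (htrans : ∀ r, ∃ s, (A r)ᵀ = A s)
    {C : Matrix ι ι ℂ} (hC : C ∈ Submodule.span ℂ (Set.range A)) :
    Cᵀ ∈ Submodule.span ℂ (Set.range A) := by
  induction hC using Submodule.span_induction with
  | mem x hx =>
    obtain ⟨r, rfl⟩ := hx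
    obtain ⟨s, hs⟩ := htrans r
    exact hs ▸ Submodule.subset_span ⟨s, rfl⟩
  | zero => simp
  | add x y _ _ hx hy => simpa using add_mem hx hy
  | smul c x _ hx => simpa using Submodule.smul_mem _ c hx

section Coherent

variable {ι κ : Type*} [Fintype ι] [DecidableEq ι]

theorem mem_adjoin_of_mem_span {A : κ → Matrix ι ι ℂ} {C : Matrix ι ι ℂ}
    (hC : C ∈ Submodule.span ℂ (Set.range A)) : C ∈ StarAlgebra.adjoin ℂ (Set.range A) :=
  (Submodule.span_le (p := (StarAlgebra.adjoin ℂ (Set.range A)).toSubalgebra.toSubmodule)).mpr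
    (StarAlgebra.subset_adjoin ℂ _) hC

variable [Fintype κ]

theorem IsZeroOnePartition.allOnes_mem_adjoin {A : κ → Matrix ι ι ℂ}
    (hA : IsZeroOnePartition A) : 𝐉 ∈ StarAlgebra.adjoin ℂ (Set.range A) :=
  hA.sum_eq ▸ sum_mem fun r _ => StarAlgebra.subset_adjoin ℂ _ ⟨r, rfl⟩

open scoped Pointwise in
theorem mul_mem_span {A : κ → Matrix ι ι ℂ}
    (hprod : ∀ r s, ∃ c : κ → ℂ, A r * A s = ∑ t, c t • A t) {x y : Matrix ι ι ℂ}
    (hx : x ∈ Submodule.span ℂ (Set.range A)) (hy : y ∈ Submodule.span ℂ (Set.range A)) :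
    x * y ∈ Submodule.span ℂ (Set.range A) := by
  have hprod' : Set.range A * Set.range A ⊆ Submodule.span ℂ (Set.range A) := by
    rintro _ ⟨_, ⟨r, rfl⟩, _, ⟨s, rfl⟩, rfl⟩
    obtain ⟨c, hc⟩ := hprod r s
    show A r * A s ∈ _
    rw [hc]
    exact Submodule.sum_mem _ fun t _ => Submodule.smul_mem _ _ (Submodule.subset_span ⟨t, rfl⟩)
  have hxy := Submodule.mul_mem_mul hx hy
  rw [Submodule.span_mul_span] at hxy
  exact Submodule.span_le.mpr hprod' hxy

structure IsHomogeneousCoherent (A : κ → Matrix ι ι ℂ) (r₀ : κ) : Prop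
    extends IsZeroOnePartition A where
  eq_one : A r₀ = 1
  transpose_eq : ∀ r, ∃ s, (A r)ᵀ = A s
  mul_eq_sum : ∀ r s, ∃ c : κ → ℂ, A r * A s = ∑ t, c t • A t

namespace IsHomogeneousCoherent

variable {A : κ → Matrix ι ι ℂ} {r₀ : κ}

theorem mem_span_of_mem_adjoin (hA : IsHomogeneousCoherent A r₀) {C : Matrix ι ι ℂ}
    (hC : C ∈ StarAlgebra.adjoin ℂ (Set.range A)) : C ∈ Submodule.span ℂ (Set.range A) := by
  induction hC using StarAlgebra.adjoin_induction with
  | mem x hx => exact Submodule.subset_span hx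
  | algebraMap c =>
    rw [Algebra.algebraMap_eq_smul_one, ← hA.eq_one]
    exact Submodule.smul_mem _ _ (Submodule.subset_span ⟨r₀, rfl⟩)
  | add x y _ _ hx hy => exact add_mem hx hy
  | mul x y _ _ hx hy => exact mul_mem_span hA.mul_eq_sum hx hy
  | star x _ hx => exact hA.star_mem_span hA.transpose_eq hx

theorem transpose_mem_adjoin (hA : IsHomogeneousCoherent A r₀) {C : Matrix ι ι ℂ}
    (hC : C ∈ StarAlgebra.adjoin ℂ (Set.range A)) : Cᵀ ∈ StarAlgebra.adjoin ℂ (Set.range A) :=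
  mem_adjoin_of_mem_span (transpose_mem_span hA.transpose_eq (hA.mem_span_of_mem_adjoin hC))

variable [DecidableEq κ]

theorem diag_apply (hA : IsHomogeneousCoherent A r₀) (r : κ) (i : ι) :
    A r i i = if r₀ = r then 1 else 0 := by
  have h := congrFun (congrFun (hA.hadamard_eq_ite r₀ r) i) i
  split_ifs at h ⊢ with hr
  · simp [← hr, hA.eq_one]
  · simpa [hA.eq_one] using h

theorem diag_eq_of_mem_adjoin (hA : IsHomogeneousCoherent A r₀) {C : Matrix ι ι ℂ}
    (hC : C ∈ StarAlgebra.adjoin ℂ (Set.range A)) (i j : ι) : C i i = C j j := by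
  have hspan := hA.mem_span_of_mem_adjoin hC
  clear hC
  induction hspan using Submodule.span_induction with
  | mem x hx =>
    obtain ⟨r, rfl⟩ := hx
    rw [hA.diag_apply, hA.diag_apply]
  | zero => rfl
  | add x y _ _ hx hy => simp [hx, hy]
  | smul c x _ hx => simp [hx]

theorem compl_hadamard_eq_self (hA : IsHomogeneousCoherent A r₀) (T : Finset κ) {r : κ}
    (hr₀ : r ≠ r₀) (hrT : r ∉ T) : (𝐉 - 1 - ∑ s ∈ T, A s) ⊙ A r = A r := by
  have hsub : ∀ X Y Z : Matrix ι ι ℂ, (X - Y) ⊙ Z = X ⊙ Z - Y ⊙ Z := fun _ _ _ => by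
    ext
    simp [sub_mul]
  rw [hsub, hsub, ← hA.eq_one, hA.hadamard_eq_ite, if_neg (Ne.symm hr₀),
    hA.sum_hadamard_eq_ite, if_neg hrT]
  ext
  simp

theorem trace_classProj_mul (hA : IsHomogeneousCoherent A r₀) (X : Matrix ι ι ℂ)
    {C : Matrix ι ι ℂ} (hC : C ∈ StarAlgebra.adjoin ℂ (Set.range A)) :
    (classProj A X * C).trace = (X * C).trace := by
  have key : ∀ D ∈ Submodule.span ℂ (Set.range A),
      (classProj A X * Dᵀ).trace = (X * Dᵀ).trace := fun D hD => by
    induction hD using Submodule.span_induction with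
    | mem x hx =>
      obtain ⟨t, rfl⟩ := hx
      exact hA.trace_classProj_mul_transpose X t
    | zero => simp
    | add x y _ _ hx hy => simp [Matrix.mul_add, hx, hy]
    | smul c x _ hx => simp [hx]
  simpa using key _ (transpose_mem_span hA.transpose_eq (hA.mem_span_of_mem_adjoin hC))

theorem trace_mul_transpose_classProj_of_hadamard_eq_zero (hA : IsHomogeneousCoherent A r₀)
    (R : Finset κ) {M N : Matrix ι ι ℂ} (hMA : M ⊙ ∑ r ∈ R, A r = 0)
    (hNA : N ⊙ (𝐉 - 1 - ∑ r ∈ R, A r) = 0) :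
    (M * (classProj A N)ᵀ).trace = M.trace * N.trace / Fintype.card ι := by
  rw [trace_mul_transpose_classProj, Finset.sum_eq_single r₀ _ (by simp)]
  · simp only [hA.eq_one, transpose_one, Matrix.mul_one, trace_one]
    ring
  intro r _ hr₀
  by_cases hr : r ∈ R
  · rw [trace_mul_transpose_eq_zero_of_hadamard_eq_zero hMA
      (by rw [hA.sum_hadamard_eq_ite, if_pos hr]), mul_zero]
  · rw [trace_mul_transpose_eq_zero_of_hadamard_eq_zero hNA (hA.compl_hadamard_eq_self R hr₀ hr),
      zero_div, zero_mul]

theorem mul_allOnes_eq (hA : IsHomogeneousCoherent A r₀) {C : Matrix ι ι ℂ}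
    (hC : C ∈ StarAlgebra.adjoin ℂ (Set.range A)) :
    C * 𝐉 = ((C * 𝐉).trace / (Fintype.card ι : ℂ)) • 𝐉 :=
  eq_trace_div_card_smul_allOnes (fun i j => by simp [mul_apply])
    (hA.diag_eq_of_mem_adjoin (mul_mem hC hA.allOnes_mem_adjoin))

theorem allOnes_mul_eq (hA : IsHomogeneousCoherent A r₀) {C : Matrix ι ι ℂ}
    (hC : C ∈ StarAlgebra.adjoin ℂ (Set.range A)) :
    𝐉 * C = ((C * 𝐉).trace / (Fintype.card ι : ℂ)) • 𝐉 := by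
  have hdiag := hA.diag_eq_of_mem_adjoin (mul_mem hA.allOnes_mem_adjoin hC)
  rw [trace_mul_comm]
  have hcol : ∀ i j, ((𝐉 : Matrix ι ι ℂ) * C) i j = ((𝐉 : Matrix ι ι ℂ) * C) j j := fun i j => by
    simp [mul_apply]
  exact eq_trace_div_card_smul_allOnes (fun i j => (hcol i j).trans (hdiag j i)) hdiag

end IsHomogeneousCoherent

end Coherent

theorem coherent_config_ratio_bound_general {n d : ℕ}
    (G : SimpleGraph (Fin n)) [DecidableRel G.Adj]
    (A : Fin (d + 1) → Matrix (Fin n) (Fin n) ℂ)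
    (hA0 : A 0 = 1)
    (h01 : ∀ r, ∀ i j, A r i j = 0 ∨ A r i j = 1)
    (hsum : ∑ r, A r = Matrix.of fun _ _ => (1 : ℂ))
    (htrans : ∀ r, ∃ s, (A r)ᵀ = A s)
    (hprod : ∀ r s, ∃ c : Fin (d + 1) → ℂ, A r * A s = ∑ t, c t • A t)
    (R : Finset (Fin (d + 1)))
    (hadj : G.adjMatrix ℂ = ∑ r ∈ R, A r)
    (M N : Matrix (Fin n) (Fin n) ℂ)
    (hM : M.PosSemidef) (hN : N.PosSemidef)
    (hMnz : M ≠ 0) (hNnz : N ≠ 0)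
    (hMA : Matrix.hadamard M (G.adjMatrix ℂ) = 0)
    (hNA : Matrix.hadamard N ((Matrix.of fun _ _ => (1 : ℂ)) - 1 - G.adjMatrix ℂ) = 0) :
    Matrix.trace ((Matrix.of fun _ _ => (1 : ℂ)) * M) *
        Matrix.trace ((Matrix.of fun _ _ => (1 : ℂ)) * N) /
      (Matrix.trace M * Matrix.trace N) ≤ (n : ℂ) := by
  have hA : IsHomogeneousCoherent A 0 := ⟨⟨h01, hsum⟩, hA0, htrans, hprod⟩
  have hMS := mem_adjoin_of_mem_span (classProj_mem_span (A := A) M)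
  have hNS := mem_adjoin_of_mem_span (classProj_mem_span (A := A) N)
  have hP := posSemidef_of_forall_trace_mul_eq hMS hM fun _ => hA.trace_classProj_mul M
  have hQ := (posSemidef_of_forall_trace_mul_eq hNS hN fun _ => hA.trace_classProj_mul N).transpose
  have hJP : (𝐉 * classProj A M).trace = (𝐉 * M).trace := by
    rw [trace_mul_comm, hA.trace_classProj_mul M hA.allOnes_mem_adjoin, trace_mul_comm]
  have hJQ : (𝐉 * (classProj A N)ᵀ).trace = (𝐉 * N).trace := by
    rw [← trace_transpose, transpose_mul, transpose_transpose, allOnes_transpose,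
      hA.trace_classProj_mul N hA.allOnes_mem_adjoin, trace_mul_comm]
  have hPQ : (classProj A M * (classProj A N)ᵀ).trace = M.trace * N.trace / n := by
    rw [hA.trace_classProj_mul M (hA.transpose_mem_adjoin hNS)]
    rw [hadj] at hMA hNA
    simpa only [Fintype.card_fin] using
      hA.trace_mul_transpose_classProj_of_hadamard_eq_zero R hMA hNA
  have key := trace_allOnes_mul_mul_trace_allOnes_mul_le hP hQ (hA.mul_allOnes_eq hMS)
    (hA.allOnes_mul_eq hMS)
  rw [hJP, hJQ, hPQ, Fintype.card_fin] at key
  have hn : (n : ℂ) ≠ 0 := by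
    intro h
    obtain rfl : n = 0 := Nat.cast_eq_zero.mp h
    exact hMnz (Subsingleton.elim _ _)
  rw [div_le_iff₀ (mul_pos (hM.trace_pos hMnz) (hN.trace_pos hNnz))]
  calc _ ≤ (n : ℂ) ^ 2 * (M.trace * N.trace / n) := key
    _ = n * (M.trace * N.trace) := by field_simp

/-- Theorem for graphs in homogeneous coherent configurations (condition (A)):
if G is connected, its adjacency matrix A is a sum of non-identity classes of a
homogeneous coherent configuration, and M, N are nonzero PSD matrices with
M ∘ A = 0 and N ∘ (J - I - A) = 0, then n ≥ (tr JM)(tr JN)/((tr M)(tr N)). -/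
theorem coherent_config_ratio_bound {n d : ℕ}
    (G : SimpleGraph (Fin n)) [DecidableRel G.Adj]
    (hconn : G.Connected)
    (A : Fin (d + 1) → Matrix (Fin n) (Fin n) ℂ)
    (hA0 : A 0 = 1)
    (h01 : ∀ r, ∀ i j, A r i j = 0 ∨ A r i j = 1)
    (hsum : ∑ r, A r = Matrix.of fun _ _ => (1 : ℂ))
    (hdiag : ∀ r, (∀ i j : Fin n, i ≠ j → A r i j = 0) ∨ (∀ i : Fin n, A r i i = 0))
    (htrans : ∀ r, ∃ s, (A r)ᵀ = A s)
    (hprod : ∀ r s, ∃ c : Fin (d + 1) → ℂ, A r * A s = ∑ t, c t • A t)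
    (R : Finset (Fin (d + 1))) (hR : (0 : Fin (d + 1)) ∉ R)
    (hadj : G.adjMatrix ℂ = ∑ r ∈ R, A r)
    (M N : Matrix (Fin n) (Fin n) ℂ)
    (hM : M.PosSemidef) (hN : N.PosSemidef)
    (hMnz : M ≠ 0) (hNnz : N ≠ 0)
    (hMA : Matrix.hadamard M (G.adjMatrix ℂ) = 0)
    (hNA : Matrix.hadamard N ((Matrix.of fun _ _ => (1 : ℂ)) - 1 - G.adjMatrix ℂ) = 0) :
    Matrix.trace ((Matrix.of fun _ _ => (1 : ℂ)) * M) *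
        Matrix.trace ((Matrix.of fun _ _ => (1 : ℂ)) * N) /
      (Matrix.trace M * Matrix.trace N) ≤ (n : ℂ) :=
  coherent_config_ratio_bound_general G A hA0 h01 hsum htrans hprod R hadj M N hM hN hMnz hNnz hMA
    hNA
end

section
/- If S is a clique and T is a coclique (independent set) in a 1-walk regular graph G on n vertices, then |S|·|T| ≤ n. -/
/-!
Let `d` be the valency and `τ < 0` the least eigenvalue of the adjacency matrix `A`
(1-walk regularity forces `G` to be regular). Hoffman's ratio bound gives
`|T| (d - τ) ≤ -τ n`. For the clique, a positive multiple `P` of the projection onto the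
`τ`-eigenspace is a polynomial in `A`, so by 1-walk regularity it has a constant `α` on the
diagonal and a constant `β` on the edges. Comparing diagonals in `P A = τ P` gives `β d = τ α`,
and `1_Sᵀ P 1_S = |S| (α + (|S| - 1) β) ≥ 0` then gives `(|S| - 1) (-τ) ≤ d`. Multiplying the
two bounds yields `|S| |T| ≤ n`.
-/

open Matrix Polynomial Finset

theorem Polynomial.aeval_mem_of_forall_pow_mem {R A : Type*} [CommSemiring R] [Semiring A]
    [Algebra R A] {W : Submodule R A} {x : A} (h : ∀ k, x ^ k ∈ W) (q : R[X]) :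
    aeval x q ∈ W := by
  rw [aeval_eq_sum_range]
  exact Submodule.sum_mem _ fun k _ => Submodule.smul_mem _ _ (h k)

namespace Matrix.IsHermitian

variable {N : Type*} [Fintype N] [DecidableEq N] {A : Matrix N N ℝ} (hA : A.IsHermitian)
include hA

theorem aeval_eq_conj_diagonal (q : ℝ[X]) :
    aeval A q = (hA.eigenvectorUnitary : Matrix N N ℝ) *
      diagonal (fun i => q.eval (hA.eigenvalues i)) *
        star (hA.eigenvectorUnitary : Matrix N N ℝ) := by
  rw [← cfc_polynomial q A, hA.cfc_eq]
  rfl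

theorem posSemidef_aeval {q : ℝ[X]} (hq : ∀ i, 0 ≤ q.eval (hA.eigenvalues i)) :
    (aeval A q).PosSemidef := by
  rw [hA.aeval_eq_conj_diagonal, Unitary.isUnit_coe.posSemidef_star_right_conjugate_iff,
    posSemidef_diagonal_iff]
  exact hq

theorem aeval_eq_zero {q : ℝ[X]} (hq : ∀ i, q.eval (hA.eigenvalues i) = 0) : aeval A q = 0 := by
  simp [hA.aeval_eq_conj_diagonal, hq]

theorem trace_aeval (q : ℝ[X]) : (aeval A q).trace = ∑ i, q.eval (hA.eigenvalues i) := by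
  rw [hA.aeval_eq_conj_diagonal, trace_mul_cycle, Unitary.coe_star_mul_self, one_mul,
    trace_diagonal]

theorem posSemidef_sub_smul_one {τ : ℝ} (hτ : ∀ i, τ ≤ hA.eigenvalues i) :
    (A - τ • 1).PosSemidef := by
  have h := hA.posSemidef_aeval (q := X - C τ) (by simpa)
  rwa [map_sub, aeval_X, aeval_C, Algebra.algebraMap_eq_smul_one] at h

theorem exists_aeval_posSemidef_mul_eq_smul (j : N) :
    ∃ q : ℝ[X], (aeval A q).PosSemidef ∧ aeval A q * A = hA.eigenvalues j • aeval A q ∧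
      0 < (aeval A q).trace := by
  set θ := hA.eigenvalues j
  set q : ℝ[X] := ∏ i ∈ univ.filter (hA.eigenvalues · ≠ θ), (X - C (hA.eigenvalues i)) ^ 2
  have hq_eval (x : ℝ) : q.eval x = ∏ i ∈ univ.filter (hA.eigenvalues · ≠ θ),
      (x - hA.eigenvalues i) ^ 2 := by
    simp [q, eval_prod]
  have hq_nonneg (x : ℝ) : 0 ≤ q.eval x := hq_eval x ▸ prod_nonneg fun _ _ => sq_nonneg _
  have hq_zero (i) (hi : hA.eigenvalues i ≠ θ) : q.eval (hA.eigenvalues i) = 0 := by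
    rw [hq_eval]
    exact prod_eq_zero (by simpa using hi) (by simp)
  have hq_pos : 0 < q.eval θ := by
    rw [hq_eval]
    refine prod_pos fun i hi => ?_
    have : θ - hA.eigenvalues i ≠ 0 := sub_ne_zero.2 (mem_filter.1 hi).2.symm
    positivity
  refine ⟨q, hA.posSemidef_aeval fun i => hq_nonneg _, ?_, ?_⟩
  · have h : aeval A (q * (X - C θ)) = 0 := hA.aeval_eq_zero fun i => by
      by_cases hi : hA.eigenvalues i = θ
      · simp [hi]
      · simp [hq_zero i hi]
    rwa [map_mul, map_sub, aeval_X, aeval_C, Algebra.algebraMap_eq_smul_one, mul_sub,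
      mul_smul_one, sub_eq_zero] at h
  · rw [hA.trace_aeval]
    exact sum_pos' (fun i _ => hq_nonneg _) ⟨j, mem_univ j, hq_pos⟩

theorem exists_eigenvalues_neg (htr : A.trace = 0) (hA₀ : A ≠ 0) : ∃ i, hA.eigenvalues i < 0 := by
  by_contra! h
  exact hA₀ ((hA.posSemidef_iff_eigenvalues_nonneg.2 h).trace_eq_zero_iff.1 htr)

end Matrix.IsHermitian

namespace Matrix.PosSemidef

theorem sum_sum_nonneg {V R : Type*} [Fintype V] [CommRing R] [PartialOrder R] [StarRing R]
    [TrivialStar R] {P : Matrix V V R} (hP : P.PosSemidef) (S : Finset V) :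
    0 ≤ ∑ u ∈ S, ∑ v ∈ S, P u v := by
  classical
  simpa [dotProduct, mulVec, mul_sum, sum_ite_mem] using
    hP.dotProduct_mulVec_nonneg fun v => if v ∈ S then (1 : R) else 0

end Matrix.PosSemidef

namespace SimpleGraph

variable {V : Type*}

section diagEdgeConst

variable (G : SimpleGraph V) (R : Type*) [Semiring R]

/-- `G` is 1-walk regular exactly when every power of its adjacency matrix lies in this
subspace. -/
def diagEdgeConst : Submodule R (Matrix V V R) where
  carrier := {M | (∀ u v, M u u = M v v) ∧
    ∀ u v u' v', G.Adj u v → G.Adj u' v' → M u v = M u' v'}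
  add_mem' {M N} hM hN :=
    ⟨fun u v => by simp [hM.1 u v, hN.1 u v],
      fun u v u' v' h h' => by simp [hM.2 u v u' v' h h', hN.2 u v u' v' h h']⟩
  zero_mem' := by simp
  smul_mem' c M hM :=
    ⟨fun u v => by simp [hM.1 u v], fun u v u' v' h h' => by simp [hM.2 u v u' v' h h']⟩

variable {G R}

theorem mem_diagEdgeConst {M : Matrix V V R} :
    M ∈ G.diagEdgeConst R ↔
      (∀ u v, M u u = M v v) ∧ ∀ u v u' v', G.Adj u v → G.Adj u' v' → M u v = M u' v' :=
  Iff.rfl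

variable [DecidableEq V]

theorem one_mem_diagEdgeConst : (1 : Matrix V V R) ∈ G.diagEdgeConst R :=
  ⟨fun u v => by simp, fun u v u' v' h h' => by simp [h.ne, h'.ne]⟩

variable [DecidableRel G.Adj]

theorem mem_diagEdgeConst_of_hadamard {M : Matrix V V R} {a b : R} (h1 : M ⊙ 1 = a • 1)
    (hA : M ⊙ G.adjMatrix R = b • G.adjMatrix R) : M ∈ G.diagEdgeConst R := by
  have hdiag u : M u u = a := by simpa using congrFun₂ h1 u u
  have hedge u v (huv : G.Adj u v) : M u v = b := by simpa [huv] using congrFun₂ hA u v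
  exact ⟨fun u v => by rw [hdiag, hdiag],
    fun u v u' v' h h' => by rw [hedge u v h, hedge u' v' h']⟩

variable [Fintype V] [CharZero R]

theorem adjMatrix_pow_mem_diagEdgeConst_iff {S : Type*} [Semiring S] [CharZero S] (k : ℕ) :
    G.adjMatrix R ^ k ∈ G.diagEdgeConst R ↔ G.adjMatrix S ^ k ∈ G.diagEdgeConst S := by
  simp only [mem_diagEdgeConst, adjMatrix_pow_apply_eq_card_walk, Nat.cast_inj]

theorem isRegularOfDegree_of_sq_mem_diagEdgeConst (h : G.adjMatrix R ^ 2 ∈ G.diagEdgeConst R)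
    (v : V) : G.IsRegularOfDegree (G.degree v) := by
  intro u
  have := h.1 u v
  rwa [sq, adjMatrix_mul_self_apply_self, adjMatrix_mul_self_apply_self, Nat.cast_inj] at this

end diagEdgeConst

variable {G : SimpleGraph V}

theorem IsClique.sum_sum_apply {R : Type*} [Ring R] {S : Finset V}
    (hS : G.IsClique (S : Set V)) {M : Matrix V V R} {a b : R} (hdiag : ∀ u, M u u = a)
    (hedge : ∀ u v, G.Adj u v → M u v = b) :
    ∑ u ∈ S, ∑ v ∈ S, M u v = S.card * (a + ((S.card : R) - 1) * b) := by
  classical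
  have hrow : ∀ u ∈ S, ∑ v ∈ S, M u v = a + ((S.card : R) - 1) * b := by
    intro u hu
    have hoff : ∀ v ∈ S.erase u, M u v = b := fun v hv =>
      hedge u v (hS hu (mem_of_mem_erase hv) (ne_of_mem_erase hv).symm)
    rw [← add_sum_erase _ _ hu, hdiag, sum_congr rfl hoff, sum_const, card_erase_of_mem hu,
      nsmul_eq_mul, Nat.cast_pred (card_pos.2 ⟨u, hu⟩)]
  rw [sum_congr rfl hrow, sum_const, nsmul_eq_mul]

variable [Fintype V] [DecidableRel G.Adj]

theorem IsClique.card_sub_one_mul_neg_le {d : ℕ} (hreg : G.IsRegularOfDegree d) {τ : ℝ}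
    {P : Matrix V V ℝ} (hP : P.PosSemidef) (hPW : P ∈ G.diagEdgeConst ℝ)
    (hPA : P * G.adjMatrix ℝ = τ • P) (htr : 0 < P.trace) {S : Finset V}
    (hS : G.IsClique (S : Set V)) (hS₁ : 1 < S.card) :
    ((S.card : ℝ) - 1) * -τ ≤ d := by
  obtain ⟨u, hu, v, hv, huv⟩ := one_lt_card.1 hS₁
  have hdiag (w : V) : P w w = P u u := hPW.1 w u
  have hedge (w x : V) (hwx : G.Adj w x) : P w x = P u v := hPW.2 w x u v hwx (hS hu hv huv)
  have hα : 0 < P u u := by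
    simp only [trace, diag_apply, hdiag, sum_const, nsmul_eq_mul] at htr
    exact pos_of_mul_pos_right htr (Nat.cast_nonneg _)
  have hβ : P u v * d = τ * P u u := by
    have h := congrFun₂ hPA u u
    rwa [mul_adjMatrix_apply,
      sum_congr rfl fun w hw => hedge u w ((mem_neighborFinset G u w).1 hw), sum_const,
      card_neighborFinset_eq_degree, hreg u, Matrix.smul_apply, nsmul_eq_mul, smul_eq_mul,
      mul_comm] at h
  have hsum := hP.sum_sum_nonneg S
  rw [hS.sum_sum_apply hdiag hedge] at hsum
  have hrow : 0 ≤ P u u + ((S.card : ℝ) - 1) * P u v :=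
    nonneg_of_mul_nonneg_right hsum (by exact_mod_cast card_pos.2 ⟨u, hu⟩)
  nlinarith [mul_nonneg hrow (Nat.cast_nonneg (α := ℝ) d)]

variable [DecidableEq V]

/-- Hoffman's ratio bound: evaluate the quadratic form of `A - τ • 1 ⪰ 0` at
`n • 1_T - |T| • 1`, which is orthogonal to the all-ones eigenvector. -/
theorem IsIndepSet.card_mul_sub_le {d : ℕ} (hreg : G.IsRegularOfDegree d) {τ : ℝ}
    (hτ : (G.adjMatrix ℝ - τ • 1).PosSemidef) {T : Finset V} (hT : G.IsIndepSet (T : Set V)) :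
    (T.card : ℝ) * (d - τ) ≤ -τ * Fintype.card V := by
  rcases T.eq_empty_or_nonempty with rfl | ⟨w, hw⟩
  · obtain hV | ⟨⟨v⟩⟩ := isEmpty_or_nonempty V
    · simp
    · have hτ₀ : 0 ≤ -τ := by simpa using hτ.diag_nonneg (i := v)
      simpa using mul_nonneg hτ₀ (Nat.cast_nonneg (α := ℝ) (Fintype.card V))
  set x : V → ℝ := fun v => if v ∈ T then 1 else 0
  set o : V → ℝ := Function.const V 1
  have hAo : G.adjMatrix ℝ *ᵥ o = (d : ℝ) • o := by
    funext v; simp [o, hreg v]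
  have hoA : o ᵥ* G.adjMatrix ℝ = (d : ℝ) • o := by
    funext v; simp [o, hreg v]
  have hxAx : x ⬝ᵥ G.adjMatrix ℝ *ᵥ x = 0 := by
    rw [dotProduct_mulVec_adjMatrix]
    refine sum_eq_zero fun u _ => sum_eq_zero fun v _ => ite_eq_right_iff.2 fun huv => ?_
    by_cases hu : u ∈ T
    · have hv : v ∉ T := fun hv => hT hu hv huv.ne huv
      simp [x, hv]
    · simp [x, hu]
  have hquad := hτ.dotProduct_mulVec_nonneg ((Fintype.card V : ℝ) • x - (T.card : ℝ) • o)
  simp only [star_trivial, sub_mulVec, smul_mulVec, one_mulVec, mulVec_sub, mulVec_smul,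
    dotProduct_sub, sub_dotProduct, dotProduct_smul, smul_dotProduct, smul_eq_mul, hxAx,
    dotProduct_mulVec o, hoA, hAo] at hquad
  simp only [dotProduct, x, o, Function.const_one, Pi.one_apply, mul_one, mul_zero, mul_ite,
    sum_ite_mem, univ_inter, inter_self, sum_const, card_univ, nsmul_eq_mul] at hquad
  have hnt : (0 : ℝ) < Fintype.card V * T.card := by
    have : 0 < T.card := card_pos.2 ⟨w, hw⟩
    have : 0 < Fintype.card V := Fintype.card_pos_iff.2 ⟨w⟩
    positivity
  nlinarith

end SimpleGraph

/-- Clique-coclique bound for 1-walk regular graphs: if S is a clique and T a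
coclique in a 1-walk regular graph on n vertices, then |S|·|T| ≤ n. -/
theorem clique_coclique_one_walk_regular {n : ℕ}
    (G : SimpleGraph (Fin n)) [DecidableRel G.Adj]
    (hwalk : ∀ k : ℕ, 0 < k → ∃ a b : ℂ,
      Matrix.hadamard ((G.adjMatrix ℂ) ^ k) 1 = a • (1 : Matrix (Fin n) (Fin n) ℂ) ∧
      Matrix.hadamard ((G.adjMatrix ℂ) ^ k) (G.adjMatrix ℂ) = b • G.adjMatrix ℂ)
    (S T : Finset (Fin n))
    (hS : G.IsClique (S : Set (Fin n)))
    (hT : ∀ u ∈ T, ∀ v ∈ T, ¬ G.Adj u v) :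
    S.card * T.card ≤ n := by
  have hpow (k : ℕ) : G.adjMatrix ℝ ^ k ∈ G.diagEdgeConst ℝ := by
    rcases k.eq_zero_or_pos with rfl | hk
    · simpa using SimpleGraph.one_mem_diagEdgeConst
    obtain ⟨a, b, h1, hA⟩ := hwalk k hk
    exact (SimpleGraph.adjMatrix_pow_mem_diagEdgeConst_iff k).1
      (SimpleGraph.mem_diagEdgeConst_of_hadamard h1 hA)
  rcases le_or_gt S.card 1 with hS₁ | hS₁
  · calc S.card * T.card ≤ 1 * T.card := Nat.mul_le_mul_right _ hS₁
      _ ≤ n := by simpa using T.card_le_univ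
  obtain ⟨u, hu, v, hv, huv⟩ := one_lt_card.1 hS₁
  have hA₀ : G.adjMatrix ℝ ≠ 0 := fun h => by
    simpa [hS hu hv huv] using congrFun₂ h u v
  have hreg := SimpleGraph.isRegularOfDegree_of_sq_mem_diagEdgeConst (hpow 2) u
  have hA := G.isHermitian_adjMatrix ℝ
  obtain ⟨i, hi⟩ := hA.exists_eigenvalues_neg (G.trace_adjMatrix ℝ) hA₀
  have : Nonempty (Fin n) := ⟨u⟩
  obtain ⟨j, hj⟩ := Finite.exists_min hA.eigenvalues
  obtain ⟨q, hP, hPA, htr⟩ := hA.exists_aeval_posSemidef_mul_eq_smul j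
  have hclique := hS.card_sub_one_mul_neg_le hreg hP
    (aeval_mem_of_forall_pow_mem hpow q) hPA htr hS₁
  have hcoclique := SimpleGraph.IsIndepSet.card_mul_sub_le hreg (hA.posSemidef_sub_smul_one hj)
    (T := T) fun u hu v hv _ => hT u hu v hv
  have hτ : hA.eigenvalues j < 0 := (hj i).trans_lt hi
  simp only [Fintype.card_fin] at hcoclique
  have : (S.card : ℝ) * T.card ≤ n := by nlinarith
  exact_mod_cast this
end

section
/- If S is a clique and T is a coclique in a connected graph G on n vertices whose adjacency matrix belongs to a homogeneous coherent configuration, then |S|·|T| ≤ n. -/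
/-!
The span `𝒜` of the `A r` is a matrix algebra containing `1`. Averaging the indicator of
`T × T` over each class gives a matrix `M ∈ 𝒜` (the orthogonal projection of `1_T 1_Tᵀ` onto
`𝒜`), characterised by `tr (X M) = 1_Tᵀ X 1_T` for `X ∈ 𝒜`. Testing this against positive
semidefinite polynomials in `M` shows that `M` is positive semidefinite. Its row sums are
`|T|² / n`, its diagonal is `|T| / n`, and it vanishes on the edges of `G` because `T` contains
none; so the quadratic form of `M` at `n 1_S - |S| 1` equals `n |S| |T| - |S|² |T|²`, whose
nonnegativity is `|S| |T| ≤ n`.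
-/

open Matrix Polynomial Finset
open scoped ComplexOrder

namespace Matrix.IsHermitian

variable {V 𝕜 : Type*} [Fintype V] [DecidableEq V] [RCLike 𝕜] {M : Matrix V V 𝕜}

theorem trace_cfc (hM : M.IsHermitian) (f : ℝ → ℝ) :
    (cfc f M).trace = ∑ i, (f (hM.eigenvalues i) : 𝕜) := by
  rw [hM.cfc_eq, IsHermitian.cfc, Unitary.conjStarAlgAut_apply, trace_mul_cycle,
    Unitary.coe_star_mul_self, one_mul, trace_diagonal]
  rfl

theorem posSemidef_of_trace_mul_nonneg (hM : M.IsHermitian)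
    (h : ∀ X ∈ Algebra.adjoin ℝ {M}, X.PosSemidef → 0 ≤ RCLike.re (X * M).trace) :
    M.PosSemidef := by
  simp only [hM.posSemidef_iff_eigenvalues_nonneg, Pi.le_def, Pi.zero_apply]
  intro i
  by_contra! hi
  set ev := hM.eigenvalues
  -- `q` vanishes at the nonnegative eigenvalues only, so `tr (q(M)² M) = ∑ q(λ)² λ < 0`
  set q : ℝ[X] := ∏ j ∈ {j | 0 ≤ ev j}, (X - C (ev j))
  have hq_eq_zero {k : V} (hk : 0 ≤ ev k) : q.eval (ev k) = 0 := by
    simp only [q, eval_prod]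
    exact prod_eq_zero (mem_filter.2 ⟨mem_univ k, hk⟩) (by simp)
  have hq_ne_zero : q.eval (ev i) ≠ 0 := by
    simp only [q, eval_prod, eval_sub, eval_X, eval_C]
    exact prod_ne_zero_iff.2 fun j hj => sub_ne_zero.2 (hi.trans_le (mem_filter.1 hj).2).ne
  have : IsSelfAdjoint M := hM
  have hqM : (aeval M q).IsHermitian := by
    rw [← cfc_polynomial q M]
    exact cfc_predicate _ M
  have hqM_sq : (aeval M q ^ 2).PosSemidef := by
    simpa [sq, hqM.eq] using posSemidef_conjTranspose_mul_self (aeval M q)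
  have hcfc : aeval M q ^ 2 * M = cfc (fun x => q.eval x ^ 2 * x) M := by
    rw [cfc_mul (fun x => q.eval x ^ 2) (fun x => x) M, cfc_pow (fun x => q.eval x) 2 M,
      cfc_polynomial q M, cfc_id' ℝ M]
  have hnonneg := h _ (Subalgebra.pow_mem _ (aeval_mem_adjoin_singleton ℝ M) 2) hqM_sq
  rw [hcfc, hM.trace_cfc, map_sum] at hnonneg
  simp only [RCLike.ofReal_re] at hnonneg
  have hterm (k : V) : q.eval (ev k) ^ 2 * ev k ≤ 0 := by
    rcases le_or_gt 0 (ev k) with hk | hk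
    · simp [hq_eq_zero hk]
    · exact mul_nonpos_of_nonneg_of_nonpos (sq_nonneg _) hk.le
  have hneg : ∑ k, q.eval (ev k) ^ 2 * ev k < ∑ _k : V, (0 : ℝ) :=
    sum_lt_sum (fun k _ => hterm k) ⟨i, mem_univ i, mul_neg_of_pos_of_neg (by positivity) hi⟩
  rw [sum_const_zero] at hneg
  linarith

end Matrix.IsHermitian

theorem card_sq_mul_le_of_posSemidef {V 𝕜 : Type*} [Fintype V] [DecidableEq V] [RCLike 𝕜]
    {M : Matrix V V 𝕜} (hM : M.PosSemidef) {S : Finset V} {ρ δ : ℝ}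
    (hrow : ∀ i, ∑ j, M i j = ρ) (hS : ∀ i ∈ S, ∀ j ∈ S, M i j = if i = j then (δ : 𝕜) else 0) :
    (#S : ℝ) ^ 2 * ρ ≤ Fintype.card V * #S * δ := by
  set n := Fintype.card V
  have hcol (j : V) : ∑ i, M i j = ρ := by
    simpa [star_sum, hM.1.apply] using congrArg star (hrow j)
  let s : V → 𝕜 := fun i => if i ∈ S then 1 else 0
  have hss : s ⬝ᵥ M *ᵥ s = #S * δ := by
    simp only [s, dotProduct, mulVec, mul_ite, ite_mul, mul_one, one_mul, mul_zero, zero_mul,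
      sum_ite_mem, univ_inter]
    rw [sum_congr rfl fun i hi => sum_congr rfl fun j hj => hS i hi j hj]
    simp
  have hs1 : s ⬝ᵥ M *ᵥ 1 = #S * ρ := by
    simp [s, dotProduct, mulVec, hrow]
  have h1s : 1 ⬝ᵥ M *ᵥ s = #S * ρ := by
    simp only [s, dotProduct, mulVec, mul_ite, mul_one, mul_zero, sum_ite_mem, univ_inter,
      Pi.one_apply, one_mul]
    exact sum_comm.trans (by simp [hcol])
  have h11 : 1 ⬝ᵥ M *ᵥ 1 = n * ρ := by
    simp [dotProduct, mulVec, hrow, n]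
  set z : V → 𝕜 := (n : 𝕜) • s - (#S : 𝕜) • 1
  have hz : star z ⬝ᵥ M *ᵥ z = ((n * (n * #S * δ - #S ^ 2 * ρ) : ℝ) : 𝕜) := by
    have hstar : star z = z := by
      ext i
      by_cases hi : i ∈ S <;> simp [z, s, hi]
    rw [hstar, mulVec_sub, mulVec_smul, mulVec_smul, dotProduct_sub, sub_dotProduct,
      sub_dotProduct]
    simp only [dotProduct_smul, smul_dotProduct, hss, hs1, h1s, h11, smul_eq_mul]
    push_cast
    ring
  have hnonneg : 0 ≤ (n : ℝ) * (n * #S * δ - #S ^ 2 * ρ) :=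
    RCLike.ofReal_nonneg.1 (hz ▸ hM.dotProduct_mulVec_nonneg z)
  rcases Nat.eq_zero_or_pos n with hn | hn
  · have : #S = 0 := Nat.eq_zero_of_le_zero (hn ▸ card_le_univ S)
    simp [this]
  · have := (mul_nonneg_iff_of_pos_left (by positivity : (0 : ℝ) < n)).1 hnonneg
    linarith

section Partition

variable {V ι : Type*} [DecidableEq ι] {A : ι → Matrix V V ℂ}

def IsPartition (A : ι → Matrix V V ℂ) : Prop :=
  ∀ i j, ∃ r, ∀ s, A s i j = if s = r then 1 else 0

namespace IsPartition

theorem apply_eq_ite (hA : IsPartition A) {r : ι} {i j : V} (hr : A r i j = 1) (s : ι) :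
    A s i j = if s = r then 1 else 0 := by
  obtain ⟨r', hr'⟩ := hA i j
  obtain rfl : r = r' := by simpa [hr'] using hr
  exact hr' s

theorem exists_apply_eq_one (hA : IsPartition A) (i j : V) : ∃ r, A r i j = 1 := by
  obtain ⟨r, hr⟩ := hA i j
  exact ⟨r, by simp [hr]⟩

theorem apply_eq_zero_or_one (hA : IsPartition A) (r : ι) (i j : V) :
    A r i j = 0 ∨ A r i j = 1 := by
  obtain ⟨r', hr'⟩ := hA i j
  rw [hr']
  split_ifs <;> simp

theorem sum_apply (hA : IsPartition A) {r : ι} {i j : V} (hr : A r i j = 1) (F : Finset ι) :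
    (∑ s ∈ F, A s) i j = if r ∈ F then 1 else 0 := by
  simp [Matrix.sum_apply, hA.apply_eq_ite hr]

theorem adj_iff_mem (hA : IsPartition A) {G : SimpleGraph V} [DecidableRel G.Adj]
    {R : Finset ι} (hadj : G.adjMatrix ℂ = ∑ r ∈ R, A r) {r : ι} {i j : V} (hr : A r i j = 1) :
    G.Adj i j ↔ r ∈ R := by
  have h := congrFun₂ hadj i j
  rw [hA.sum_apply hr, SimpleGraph.adjMatrix_apply] at h
  by_cases hij : G.Adj i j <;> by_cases hrR : r ∈ R <;> simp_all

variable [Fintype ι]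

theorem sum_smul_apply (hA : IsPartition A) {r : ι} {i j : V} (hr : A r i j = 1) (f : ι → ℂ) :
    (∑ s, f s • A s) i j = f r := by
  simp [Matrix.sum_apply, hA.apply_eq_ite hr]

theorem sum_apply_eq_one (hA : IsPartition A) (i j : V) : ∑ r, A r i j = 1 := by
  obtain ⟨r, hr⟩ := hA.exists_apply_eq_one i j
  simpa [Matrix.sum_apply] using hA.sum_apply hr univ

end IsPartition

theorem isPartition_of_zero_one [Fintype ι] (h01 : ∀ r i j, A r i j = 0 ∨ A r i j = 1)
    (hsum : ∑ r, A r = Matrix.of fun _ _ => 1) : IsPartition A := by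
  intro i j
  have hcard : #{r | A r i j = 1} = 1 := by
    have h := congrFun₂ hsum i j
    rw [Matrix.sum_apply, ← sum_filter_add_sum_filter_not _ (fun r => A r i j = 1),
      sum_congr rfl fun r hr => (mem_filter.1 hr).2,
      sum_eq_zero fun r hr => (h01 r i j).resolve_right (mem_filter.1 hr).2] at h
    exact_mod_cast (by simpa using h : (#{r | A r i j = 1} : ℂ) = 1)
  obtain ⟨r, hr⟩ := card_eq_one.1 hcard
  refine ⟨r, fun s => ?_⟩
  have hs := Finset.ext_iff.1 hr s
  simp only [mem_filter, mem_univ, true_and, mem_singleton] at hs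
  split_ifs with h
  · exact hs.2 h
  · exact (h01 s i j).resolve_right (mt hs.1 h)

end Partition

section PairCount

variable {V ι : Type*} {A : ι → Matrix V V ℂ}

noncomputable def pairCount (A : ι → Matrix V V ℂ) (T : Finset V) (r : ι) : ℕ :=
  #{p ∈ T ×ˢ T | A r p.1 p.2 = 1}

theorem pairCount_le_univ [Fintype V] (T : Finset V) (r : ι) :
    pairCount A T r ≤ pairCount A univ r :=
  card_le_card (filter_subset_filter _ (subset_univ _))

theorem pairCount_div_mul_cancel [Fintype V] (T : Finset V) (r : ι) :
    (pairCount A T r : ℂ) / pairCount A univ r * pairCount A univ r = pairCount A T r := by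
  rcases eq_or_ne (pairCount A univ r) 0 with h | h
  · simp [h, Nat.eq_zero_of_le_zero (h ▸ pairCount_le_univ T r)]
  · exact div_mul_cancel₀ _ (Nat.cast_ne_zero.2 h)

namespace IsPartition

variable [DecidableEq ι]

theorem sum_sum_apply (hA : IsPartition A) (T : Finset V) (r : ι) :
    ∑ u ∈ T, ∑ v ∈ T, A r u v = pairCount A T r := by
  rw [pairCount, card_filter, Nat.cast_sum, sum_product]
  refine sum_congr rfl fun u _ => sum_congr rfl fun v _ => ?_
  rcases hA.apply_eq_zero_or_one r u v with h | h <;> simp [h]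

theorem pairCount_of_transpose (hA : IsPartition A) {r s : ι} (h : (A r)ᵀ = A s)
    (T : Finset V) : pairCount A T s = pairCount A T r := by
  have : (pairCount A T s : ℂ) = pairCount A T r := by
    rw [← hA.sum_sum_apply, ← hA.sum_sum_apply, ← h]
    exact sum_comm
  exact_mod_cast this

theorem pairCount_of_eq_one [DecidableEq V] (hA : IsPartition A) {r : ι} (h : A r = 1)
    (T : Finset V) : pairCount A T r = #T := by
  have : (pairCount A T r : ℂ) = #T := by
    rw [← hA.sum_sum_apply, h]
    simp [Matrix.one_apply]
  exact_mod_cast this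

theorem sum_pairCount [Fintype ι] (hA : IsPartition A) (T : Finset V) :
    ∑ r, (pairCount A T r : ℂ) = #T ^ 2 := by
  calc ∑ r, (pairCount A T r : ℂ) = ∑ u ∈ T, ∑ v ∈ T, ∑ r, A r u v := by
        simp_rw [← hA.sum_sum_apply]
        rw [sum_comm]
        exact sum_congr rfl fun _ _ => sum_comm
    _ = #T ^ 2 := by simp [hA.sum_apply_eq_one, sq]

end IsPartition

end PairCount

theorem IsPartition.sum_row_eq {V ι : Type*} [Fintype V] [DecidableEq V] [Fintype ι]
    [DecidableEq ι] {A : ι → Matrix V V ℂ} (hA : IsPartition A) {r₀ : ι} (hA0 : A r₀ = 1)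
    (htrans : ∀ r, ∃ s, (A r)ᵀ = A s)
    (hprod : ∀ r s, ∃ c : ι → ℂ, A r * A s = ∑ t, c t • A t) (r : ι) (i i' : V) :
    ∑ j, A r i j = ∑ j, A r i' j := by
  obtain ⟨s, hs⟩ := htrans r
  obtain ⟨c, hc⟩ := hprod r s
  -- the diagonal of `A r * (A r)ᵀ` holds the row sums of `A r`, that of `∑ c t • A t` is `c r₀`
  have hrow (k : V) : ∑ j, A r k j = c r₀ := by
    rw [← hA.sum_smul_apply (by simp [hA0] : A r₀ k k = 1) c, ← hc, ← hs, Matrix.mul_apply]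
    refine sum_congr rfl fun j _ => ?_
    rcases hA.apply_eq_zero_or_one r k j with h | h <;> simp [h]
  rw [hrow, hrow]

theorem mul_mem_span_range {V ι : Type*} [Fintype V] [DecidableEq V] [Fintype ι]
    {A : ι → Matrix V V ℂ} (hprod : ∀ r s, ∃ c : ι → ℂ, A r * A s = ∑ t, c t • A t)
    {X Y : Matrix V V ℂ} (hX : X ∈ Submodule.span ℂ (Set.range A))
    (hY : Y ∈ Submodule.span ℂ (Set.range A)) : X * Y ∈ Submodule.span ℂ (Set.range A) := by
  have hle : Submodule.span ℂ (Set.range A) * Submodule.span ℂ (Set.range A)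
      ≤ Submodule.span ℂ (Set.range A) := by
    rw [Submodule.span_mul_span, Submodule.span_le]
    rintro _ ⟨_, ⟨r, rfl⟩, _, ⟨s, rfl⟩, rfl⟩
    obtain ⟨c, hc⟩ := hprod r s
    show A r * A s ∈ _
    rw [hc]
    exact (Submodule.mem_span_range_iff_exists_fun ℂ).2 ⟨c, rfl⟩
  exact hle (Submodule.mul_mem_mul hX hY)

noncomputable def classAverage {V ι : Type*} [Fintype V] [Fintype ι] (A : ι → Matrix V V ℂ)
    (T : Finset V) : Matrix V V ℂ :=
  ∑ r, ((pairCount A T r : ℂ) / pairCount A univ r) • A r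

section ClassAverage

variable {V ι : Type*} [Fintype V] [Fintype ι] [DecidableEq ι] {A : ι → Matrix V V ℂ}
  {T : Finset V}

theorem classAverage_apply (hA : IsPartition A) {r : ι} {i j : V} (hr : A r i j = 1) :
    classAverage A T i j = pairCount A T r / pairCount A univ r :=
  hA.sum_smul_apply hr _

theorem star_classAverage_apply (hA : IsPartition A) (i j : V) :
    star (classAverage A T i j) = classAverage A T i j := by
  obtain ⟨r, hr⟩ := hA.exists_apply_eq_one i j
  simp [classAverage_apply hA hr]

theorem classAverage_transpose (hA : IsPartition A) (htrans : ∀ r, ∃ s, (A r)ᵀ = A s) :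
    (classAverage A T)ᵀ = classAverage A T := by
  ext i j
  obtain ⟨r, hr⟩ := hA.exists_apply_eq_one i j
  obtain ⟨s, hs⟩ := htrans r
  have hs' : A s j i = 1 := by rw [← hs]; exact hr
  rw [transpose_apply, classAverage_apply hA hr, classAverage_apply hA hs',
    hA.pairCount_of_transpose hs, hA.pairCount_of_transpose hs]

theorem classAverage_isHermitian (hA : IsPartition A) (htrans : ∀ r, ∃ s, (A r)ᵀ = A s) :
    (classAverage A T).IsHermitian :=
  IsHermitian.ext fun i j => by
    rw [star_classAverage_apply hA, ← transpose_apply (classAverage A T) i j,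
      classAverage_transpose hA htrans]

theorem classAverage_apply_self [DecidableEq V] (hA : IsPartition A) {r₀ : ι} (hA0 : A r₀ = 1)
    (i : V) : classAverage A T i i = #T / Fintype.card V := by
  rw [classAverage_apply hA (by simp [hA0] : A r₀ i i = 1), hA.pairCount_of_eq_one hA0,
    hA.pairCount_of_eq_one hA0, card_univ]

theorem classAverage_apply_eq_zero (hA : IsPartition A) {r : ι} {i j : V} (hr : A r i j = 1)
    (hT : ∀ u ∈ T, ∀ v ∈ T, A r u v = 0) : classAverage A T i j = 0 := by
  have : pairCount A T r = 0 := by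
    simp +contextual [pairCount, filter_eq_empty_iff, hT]
  simp [classAverage_apply hA hr, this]

theorem sum_classAverage_apply [DecidableEq V] (hA : IsPartition A) {r₀ : ι} (hA0 : A r₀ = 1)
    (htrans : ∀ r, ∃ s, (A r)ᵀ = A s)
    (hprod : ∀ r s, ∃ c : ι → ℂ, A r * A s = ∑ t, c t • A t) (i : V) :
    ∑ j, classAverage A T i j = #T ^ 2 / Fintype.card V := by
  have : Nonempty V := ⟨i⟩
  have hV : (Fintype.card V : ℂ) ≠ 0 := Nat.cast_ne_zero.2 Fintype.card_ne_zero
  have hN (r : ι) : (pairCount A univ r : ℂ) = Fintype.card V * ∑ j, A r i j := by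
    rw [← hA.sum_sum_apply, sum_congr rfl fun i' _ => hA.sum_row_eq hA0 htrans hprod r i' i,
      sum_const, card_univ, nsmul_eq_mul]
  calc ∑ j, classAverage A T i j
      = ∑ r, (pairCount A T r : ℂ) / pairCount A univ r * ∑ j, A r i j := by
        simp only [classAverage, Matrix.sum_apply, Matrix.smul_apply, smul_eq_mul, mul_sum]
        exact sum_comm
    _ = ∑ r, (pairCount A T r : ℂ) / Fintype.card V := by
        refine sum_congr rfl fun r _ => ?_
        rw [eq_div_iff hV, mul_assoc, mul_comm _ (Fintype.card V : ℂ), ← hN,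
          pairCount_div_mul_cancel]
    _ = #T ^ 2 / Fintype.card V := by rw [← sum_div, hA.sum_pairCount]

theorem trace_mul_classAverage (hA : IsPartition A) (htrans : ∀ r, ∃ s, (A r)ᵀ = A s)
    {X : Matrix V V ℂ} (hX : X ∈ Submodule.span ℂ (Set.range A)) :
    (X * classAverage A T).trace = ∑ u ∈ T, ∑ v ∈ T, X u v := by
  obtain ⟨c, rfl⟩ := (Submodule.mem_span_range_iff_exists_fun ℂ).1 hX
  have hgen (r : ι) : (A r * classAverage A T).trace = pairCount A T r := by
    have hentry (i j : V) : A r i j * classAverage A T j i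
        = (pairCount A T r / pairCount A univ r) * A r i j := by
      rcases hA.apply_eq_zero_or_one r i j with h | h
      · simp [h]
      · rw [← transpose_apply (classAverage A T) i j, classAverage_transpose hA htrans,
          classAverage_apply hA h, h, one_mul, mul_one]
    simp only [trace, Matrix.diag, mul_apply, hentry, ← mul_sum, hA.sum_sum_apply,
      pairCount_div_mul_cancel]
  simp only [sum_mul, trace_sum, smul_mul_assoc, trace_smul, hgen, ← hA.sum_sum_apply,
    Matrix.sum_apply, Matrix.smul_apply, smul_eq_mul, mul_sum]
  rw [sum_comm]
  exact sum_congr rfl fun _ _ => sum_comm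

theorem classAverage_posSemidef [DecidableEq V] (hA : IsPartition A) {r₀ : ι} (hA0 : A r₀ = 1)
    (htrans : ∀ r, ∃ s, (A r)ᵀ = A s)
    (hprod : ∀ r s, ∃ c : ι → ℂ, A r * A s = ∑ t, c t • A t) :
    (classAverage A T).PosSemidef := by
  let 𝒜 : Subalgebra ℂ (Matrix V V ℂ) := (Submodule.span ℂ (Set.range A)).toSubalgebra
    (Submodule.subset_span ⟨r₀, hA0⟩) fun _ _ => mul_mem_span_range hprod
  have hadjoin : Algebra.adjoin ℝ {classAverage A T} ≤ 𝒜.restrictScalars ℝ :=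
    Algebra.adjoin_le <| Set.singleton_subset_iff.2 <|
      Submodule.sum_mem _ fun r _ => Submodule.smul_mem _ _ (Submodule.subset_span ⟨r, rfl⟩)
  refine (classAverage_isHermitian hA htrans).posSemidef_of_trace_mul_nonneg
    fun X hX hXpos => ?_
  rw [trace_mul_classAverage hA htrans (hadjoin hX)]
  convert hXpos.re_dotProduct_nonneg (fun v => if v ∈ T then 1 else 0) using 2
  simp [dotProduct, mulVec, mul_sum]

theorem classAverage_apply_eq_zero_of_adj (hA : IsPartition A) {G : SimpleGraph V}
    [DecidableRel G.Adj] {R : Finset ι} (hadj : G.adjMatrix ℂ = ∑ r ∈ R, A r)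
    (hT : ∀ u ∈ T, ∀ v ∈ T, ¬ G.Adj u v) {i j : V} (h : G.Adj i j) :
    classAverage A T i j = 0 := by
  obtain ⟨r, hr⟩ := hA.exists_apply_eq_one i j
  refine classAverage_apply_eq_zero hA hr fun u hu v hv => ?_
  refine (hA.apply_eq_zero_or_one r u v).resolve_right fun hruv => ?_
  exact hT u hu v hv ((hA.adj_iff_mem hadj hruv).2 ((hA.adj_iff_mem hadj hr).1 h))

end ClassAverage

theorem clique_coclique_coherent_general {n d : ℕ}
    (G : SimpleGraph (Fin n)) [DecidableRel G.Adj]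
    (A : Fin (d + 1) → Matrix (Fin n) (Fin n) ℂ)
    (hA0 : A 0 = 1)
    (h01 : ∀ r, ∀ i j, A r i j = 0 ∨ A r i j = 1)
    (hsum : ∑ r, A r = Matrix.of fun _ _ => (1 : ℂ))
    (htrans : ∀ r, ∃ s, (A r)ᵀ = A s)
    (hprod : ∀ r s, ∃ c : Fin (d + 1) → ℂ, A r * A s = ∑ t, c t • A t)
    (R : Finset (Fin (d + 1)))
    (hadj : G.adjMatrix ℂ = ∑ r ∈ R, A r)
    (S T : Finset (Fin n))
    (hS : G.IsClique (S : Set (Fin n)))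
    (hT : ∀ u ∈ T, ∀ v ∈ T, ¬ G.Adj u v) :
    S.card * T.card ≤ n := by
  have hA : IsPartition A := isPartition_of_zero_one h01 hsum
  have hrow (i : Fin n) : ∑ j, classAverage A T i j = ((#T ^ 2 / n : ℝ) : ℂ) := by
    simp [sum_classAverage_apply hA hA0 htrans hprod i]
  have hclique : ∀ i ∈ S, ∀ j ∈ S,
      classAverage A T i j = if i = j then ((#T / n : ℝ) : ℂ) else 0 := by
    intro i hi j hj
    split_ifs with hij
    · simp [hij, classAverage_apply_self hA hA0]
    · exact classAverage_apply_eq_zero_of_adj hA hadj hT (hS hi hj hij)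
  have key := card_sq_mul_le_of_posSemidef (ρ := #T ^ 2 / n) (δ := #T / n)
    (classAverage_posSemidef hA hA0 htrans hprod) hrow hclique
  rw [Fintype.card_fin] at key
  rcases (#S * #T).eq_zero_or_pos with hp | hp
  · simp [hp]
  have hn : (0 : ℝ) < n := by
    obtain ⟨i, -⟩ := card_pos.1 (Nat.pos_of_mul_pos_right hp)
    exact_mod_cast i.pos
  have hsq : ((#S * #T : ℕ) : ℝ) * (#S * #T : ℕ) ≤ n * (#S * #T : ℕ) := by
    field_simp at key
    push_cast
    linarith
  exact_mod_cast le_of_mul_le_mul_right hsq (by positivity)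

/-- Clique-coclique bound for connected graphs in a homogeneous coherent
configuration: if S is a clique and T a coclique, then |S|·|T| ≤ n. -/
theorem clique_coclique_coherent {n d : ℕ}
    (G : SimpleGraph (Fin n)) [DecidableRel G.Adj]
    (hconn : G.Connected)
    (A : Fin (d + 1) → Matrix (Fin n) (Fin n) ℂ)
    (hA0 : A 0 = 1)
    (h01 : ∀ r, ∀ i j, A r i j = 0 ∨ A r i j = 1)
    (hsum : ∑ r, A r = Matrix.of fun _ _ => (1 : ℂ))
    (hdiag : ∀ r, (∀ i j : Fin n, i ≠ j → A r i j = 0) ∨ (∀ i : Fin n, A r i i = 0))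
    (htrans : ∀ r, ∃ s, (A r)ᵀ = A s)
    (hprod : ∀ r s, ∃ c : Fin (d + 1) → ℂ, A r * A s = ∑ t, c t • A t)
    (R : Finset (Fin (d + 1))) (hR : (0 : Fin (d + 1)) ∉ R)
    (hadj : G.adjMatrix ℂ = ∑ r ∈ R, A r)
    (S T : Finset (Fin n))
    (hS : G.IsClique (S : Set (Fin n)))
    (hT : ∀ u ∈ T, ∀ v ∈ T, ¬ G.Adj u v) :
    S.card * T.card ≤ n :=
  clique_coclique_coherent_general G A hA0 h01 hsum htrans hprod R hadj S T hS hT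
end

section
/- For every graph G on n vertices, ϑ(G)·ϑ(Ḡ) ≥ n, where ϑ is the Lovász theta number and Ḡ is the complement of G. -/
/-!
Weak duality bounds the values of the program by `n`, so `ϑ(G)` is a finite supremum. For
`t > ϑ(G)`, the point `0` lies outside the compact convex image of the spectraplex under
`X ↦ (t tr X - ⟨J, X⟩, X ∘ A)`, and Hahn–Banach separation produces a linear functional,
positive on the spectraplex, that agrees with `t tr - ⟨J, ·⟩` on matrices vanishing on the edges.
Its symmetrized matrix `M` is positive semidefinite with `M = t I - J` off the edges of `G`,
which is Lovász's dual certificate. Then `(M + J) / (t n)` is feasible for `Ḡ` with value at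
least `n / t`, so `n ≤ t ϑ(Ḡ)` for every `t > ϑ(G)`.
-/

open Matrix
open scoped ComplexOrder

/-- The Lovász theta number of a graph: the supremum of ⟨J, X⟩ over positive
semidefinite X with X ∘ A = 0 and tr X = 1. -/
noncomputable def lovaszTheta {n : ℕ} (G : SimpleGraph (Fin n)) : ℝ :=
  sSup {r : ℝ | ∃ X : Matrix (Fin n) (Fin n) ℂ,
    X.PosSemidef ∧ (∀ i j, G.Adj i j → X i j = 0) ∧ Matrix.trace X = 1 ∧
    Matrix.trace ((Matrix.of fun _ _ => (1 : ℂ)) * X) = (r : ℂ)}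

namespace Matrix

variable {ι : Type*} [Fintype ι]

omit [Fintype ι] in
theorem PosSemidef.sq_apply_le_mul_diag {A : Matrix ι ι ℝ} (hA : A.PosSemidef) (i j : ι) :
    A i j ^ 2 ≤ A i i * A j j := by
  have h := (hA.submatrix ![i, j]).det_nonneg
  have hji : A j i = A i j := by simpa using hA.isHermitian.apply i j
  simp only [det_fin_two, submatrix_apply, Matrix.cons_val_zero, Matrix.cons_val_one, hji] at h
  linarith

theorem PosSemidef.sum_apply_nonneg {A : Matrix ι ι ℝ} (hA : A.PosSemidef) :
    0 ≤ ∑ i, ∑ j, A i j := by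
  simpa [dotProduct, mulVec, Finset.mul_sum] using hA.dotProduct_mulVec_nonneg 1

theorem PosSemidef.re_sum_apply_le_card_mul_re_trace {𝕜 : Type*} [RCLike 𝕜] [DecidableEq ι]
    {A : Matrix ι ι 𝕜} (hA : A.PosSemidef) :
    RCLike.re (∑ i, ∑ j, A i j) ≤ Fintype.card ι * RCLike.re A.trace := by
  have hpair : ∀ i j, RCLike.re (A i j) + RCLike.re (A j i) ≤
      RCLike.re (A i i) + RCLike.re (A j j) := fun i j => by
    have := hA.re_dotProduct_nonneg (Pi.single i 1 - Pi.single j 1)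
    simp only [star_sub, Pi.star_single, star_one, mulVec_sub, mulVec_single, MulOpposite.op_one,
      one_smul, dotProduct_sub, sub_dotProduct, single_dotProduct, col_apply, one_mul,
      map_sub] at this
    linarith
  have hsum := Finset.sum_le_sum fun i (_ : i ∈ Finset.univ) =>
    Finset.sum_le_sum fun j (_ : j ∈ Finset.univ) => hpair i j
  simp only [Finset.sum_add_distrib, Finset.sum_const] at hsum
  rw [Finset.sum_comm (f := fun i j => RCLike.re (A j i))] at hsum
  simp only [trace, diag_apply, map_sum, ← Finset.mul_sum, nsmul_eq_mul, Finset.card_univ]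
    at hsum ⊢
  linarith

theorem PosSemidef.map_ofReal {A : Matrix ι ι ℝ} (hA : A.PosSemidef) :
    (A.map ((↑) : ℝ → ℂ)).PosSemidef := by
  classical
  open scoped MatrixOrder in
  obtain ⟨B, rfl⟩ := CStarAlgebra.nonneg_iff_eq_star_mul_self.mp hA.nonneg
  convert posSemidef_conjTranspose_mul_self (B.map ((↑) : ℝ → ℂ)) using 1
  ext i j
  simp [mul_apply]

theorem isClosed_setOf_posSemidef : IsClosed {A : Matrix ι ι ℝ | A.PosSemidef} := by
  simp only [posSemidef_iff_dotProduct_mulVec, Set.ofPred_and, Set.ofPred_forall]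
  refine IsClosed.inter (isClosed_eq (by fun_prop) continuous_id) ?_
  exact isClosed_iInter fun x => isClosed_le continuous_const (by fun_prop)

variable (ι) in
def spectraplex : Set (Matrix ι ι ℝ) := {A | A.PosSemidef ∧ A.trace = 1}

theorem convex_spectraplex : Convex ℝ (spectraplex ι) := by
  rintro A ⟨hA, hAtr⟩ B ⟨hB, hBtr⟩ a b ha hb hab
  refine ⟨(hA.smul ha).add (hB.smul hb), ?_⟩
  simp [hAtr, hBtr, hab]

theorem isCompact_spectraplex : IsCompact (spectraplex ι) := by
  have hclosed : IsClosed (spectraplex ι) :=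
    isClosed_setOf_posSemidef.inter (isClosed_eq (by fun_prop) continuous_const)
  refine (isCompact_univ_pi fun _ => isCompact_univ_pi fun _ => isCompact_Icc (a := (-1 : ℝ))
    (b := 1)).of_isClosed_subset hclosed ?_
  rintro A ⟨hA, hAtr⟩ i - j -
  have hdiag_le : ∀ k, A k k ≤ 1 := fun k => hAtr ▸
    Finset.single_le_sum (f := fun k => A k k) (fun k _ => hA.diag_nonneg) (Finset.mem_univ k)
  have := hA.sq_apply_le_mul_diag i j
  rw [Set.mem_Icc, ← abs_le, ← sq_le_one_iff_abs_le_one]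
  nlinarith [hA.diag_nonneg (i := i), hA.diag_nonneg (i := j), hdiag_le i, hdiag_le j]

theorem inv_card_smul_one_mem_spectraplex [DecidableEq ι] [Nonempty ι] :
    (Fintype.card ι : ℝ)⁻¹ • (1 : Matrix ι ι ℝ) ∈ spectraplex ι :=
  ⟨PosSemidef.one.smul (by positivity), by simp [trace_one]⟩

theorem sum_inv_card_smul_one [DecidableEq ι] [Nonempty ι] :
    ∑ i, ∑ j, ((Fintype.card ι : ℝ)⁻¹ • (1 : Matrix ι ι ℝ)) i j = 1 := by
  simp [one_apply]

theorem nonneg_of_pos_on_spectraplex {φ : Matrix ι ι ℝ →ₗ[ℝ] ℝ}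
    (hφ : ∀ A ∈ spectraplex ι, 0 < φ A) {A : Matrix ι ι ℝ} (hA : A.PosSemidef) : 0 ≤ φ A := by
  rcases hA.trace_nonneg.eq_or_lt with htr | htr
  · simp [(hA.trace_eq_zero_iff).mp htr.symm]
  · have := hφ (A.trace⁻¹ • A) ⟨hA.smul (by positivity), by simp [htr.ne']⟩
    rw [map_smul, smul_eq_mul] at this
    exact (pos_of_mul_pos_right this (by positivity)).le

section

variable [DecidableEq ι]

theorem sum_single_apply {α : Type*} [AddCommMonoid α] (i j : ι) (c : α) :
    ∑ k, ∑ l, single i j c k l = c := by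
  rw [Finset.sum_eq_single i, Finset.sum_eq_single j] <;> simp +contextual [single_apply, eq_comm]

noncomputable def symmetrizedMatrix (φ : Matrix ι ι ℝ →ₗ[ℝ] ℝ) : Matrix ι ι ℝ :=
  of fun i j => (φ (single i j 1) + φ (single j i 1)) / 2

theorem apply_eq_sum_mul_single (φ : Matrix ι ι ℝ →ₗ[ℝ] ℝ) (A : Matrix ι ι ℝ) :
    φ A = ∑ i, ∑ j, A i j * φ (single i j 1) := by
  conv_lhs => rw [matrix_eq_sum_single A]
  simp only [map_sum]
  refine Finset.sum_congr rfl fun i _ => Finset.sum_congr rfl fun j _ => ?_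
  rw [← smul_eq_mul, ← map_smul, smul_single, smul_eq_mul, mul_one]

theorem dotProduct_symmetrizedMatrix_mulVec (φ : Matrix ι ι ℝ →ₗ[ℝ] ℝ) (x : ι → ℝ) :
    x ⬝ᵥ (symmetrizedMatrix φ *ᵥ x) = φ (vecMulVec x x) := by
  have hswap : ∑ i, ∑ j, x i * x j * φ (single j i 1) =
      ∑ i, ∑ j, x i * x j * φ (single i j 1) := by
    rw [Finset.sum_comm]
    simp only [mul_comm (x _) (x _)]
  calc x ⬝ᵥ (symmetrizedMatrix φ *ᵥ x)
      = (∑ i, ∑ j, x i * x j * φ (single i j 1) + ∑ i, ∑ j, x i * x j * φ (single j i 1)) / 2 := by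
        simp only [dotProduct, mulVec, symmetrizedMatrix, of_apply, Finset.mul_sum,
          ← Finset.sum_add_distrib, Finset.sum_div]
        refine Finset.sum_congr rfl fun i _ => Finset.sum_congr rfl fun j _ => ?_
        ring
    _ = φ (vecMulVec x x) := by
        simp only [hswap, apply_eq_sum_mul_single φ (vecMulVec x x), vecMulVec_apply]
        ring

theorem posSemidef_symmetrizedMatrix {φ : Matrix ι ι ℝ →ₗ[ℝ] ℝ}
    (hφ : ∀ x, 0 ≤ φ (vecMulVec x x)) : (symmetrizedMatrix φ).PosSemidef := by
  refine .of_dotProduct_mulVec_nonneg ?_ fun x => ?_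
  · ext i j
    simp [symmetrizedMatrix, add_comm]
  · simpa [dotProduct_symmetrizedMatrix_mulVec] using hφ x

end

theorem trace_of_one_mul {R : Type*} [NonAssocSemiring R] (A : Matrix ι ι R) :
    trace ((of fun _ _ => (1 : R)) * A) = ∑ i, ∑ j, A i j := by
  simp only [trace, diag_apply, mul_apply, of_apply, one_mul]
  exact Finset.sum_comm

end Matrix

theorem SimpleGraph.hadamard_adjMatrix_eq_zero_iff {V R : Type*} [MulZeroOneClass R]
    (G : SimpleGraph V) [DecidableRel G.Adj] {A : Matrix V V R} :
    A ⊙ G.adjMatrix R = 0 ↔ ∀ i j, G.Adj i j → A i j = 0 := by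
  simp [← Matrix.ext_iff, Matrix.hadamard_apply, SimpleGraph.adjMatrix_apply]

section LovaszTheta

variable {n : ℕ}

def lovaszThetaValues (G : SimpleGraph (Fin n)) : Set ℝ :=
  {r : ℝ | ∃ X : Matrix (Fin n) (Fin n) ℂ,
    X.PosSemidef ∧ (∀ i j, G.Adj i j → X i j = 0) ∧ Matrix.trace X = 1 ∧
    Matrix.trace ((Matrix.of fun _ _ => (1 : ℂ)) * X) = (r : ℂ)}

theorem bddAbove_lovaszThetaValues (G : SimpleGraph (Fin n)) :
    BddAbove (lovaszThetaValues G) := by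
  refine ⟨n, ?_⟩
  rintro r ⟨X, hX, -, htr, hr⟩
  have := hX.re_sum_apply_le_card_mul_re_trace
  rw [← trace_of_one_mul, hr, htr] at this
  simpa using this

theorem sum_le_lovaszTheta {G : SimpleGraph (Fin n)} {Y : Matrix (Fin n) (Fin n) ℝ}
    (hY : Y ∈ spectraplex (Fin n)) (hG : ∀ i j, G.Adj i j → Y i j = 0) :
    ∑ i, ∑ j, Y i j ≤ lovaszTheta G := by
  refine le_csSup (bddAbove_lovaszThetaValues G) ⟨Y.map (↑), hY.1.map_ofReal, ?_, ?_, ?_⟩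
  · simp +contextual [hG]
  · simpa [trace] using congrArg ((↑) : ℝ → ℂ) hY.2
  · simp [trace_of_one_mul]

theorem one_le_lovaszTheta (hn : 0 < n) (G : SimpleGraph (Fin n)) : 1 ≤ lovaszTheta G := by
  have : Nonempty (Fin n) := ⟨⟨0, hn⟩⟩
  have hI := inv_card_smul_one_mem_spectraplex (ι := Fin n)
  have := sum_le_lovaszTheta (G := G) hI fun i j hij => by simp [one_apply_ne hij.ne]
  rwa [sum_inv_card_smul_one] at this

noncomputable def lovaszThetaSlackMap (G : SimpleGraph (Fin n)) [DecidableRel G.Adj] (t : ℝ) :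
    Matrix (Fin n) (Fin n) ℝ →ₗ[ℝ] ℝ × Matrix (Fin n) (Fin n) ℝ where
  toFun X := (t * X.trace - ∑ i, ∑ j, X i j, X ⊙ G.adjMatrix ℝ)
  map_add' X Y := by
    simp only [trace_add, Matrix.add_apply, Finset.sum_add_distrib, add_hadamard, Prod.mk_add_mk]
    ring_nf
  map_smul' c X := by
    simp only [trace_smul, Matrix.smul_apply, ← Finset.mul_sum, smul_hadamard, smul_eq_mul,
      RingHom.id_apply, Prod.smul_mk]
    ring_nf

variable {G : SimpleGraph (Fin n)}

theorem exists_pos_functional_of_lovaszTheta_lt [DecidableRel G.Adj] (hn : 0 < n) {t : ℝ}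
    (ht : lovaszTheta G < t) :
    ∃ φ : Matrix (Fin n) (Fin n) ℝ →ₗ[ℝ] ℝ, (∀ X ∈ spectraplex (Fin n), 0 < φ X) ∧
      ∀ X, X ⊙ G.adjMatrix ℝ = 0 → φ X = t * X.trace - ∑ i, ∑ j, X i j := by
  let T := lovaszThetaSlackMap G t
  have hT : ∀ X, T X = (t * X.trace - ∑ i, ∑ j, X i j, X ⊙ G.adjMatrix ℝ) := fun _ => rfl
  have hzero : (0 : ℝ × Matrix (Fin n) (Fin n) ℝ) ∉ T '' spectraplex (Fin n) := by
    rintro ⟨X, hX, hTX⟩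
    rw [hT, Prod.mk_eq_zero, hX.2, mul_one, sub_eq_zero, G.hadamard_adjMatrix_eq_zero_iff] at hTX
    exact ht.not_ge (hTX.1 ▸ sum_le_lovaszTheta hX hTX.2)
  -- `Matrix` is a type synonym, so instance search does not find the `Pi` instance.
  have : LocallyConvexSpace ℝ (Matrix (Fin n) (Fin n) ℝ) := Pi.locallyConvexSpace
  obtain ⟨f, u, hfu, hf⟩ := geometric_hahn_banach_point_closed
    (convex_spectraplex.linear_image T)
    (isCompact_spectraplex.image T.continuous_of_finiteDimensional).isClosed hzero
  have hpos : ∀ X ∈ spectraplex (Fin n), 0 < f (T X) := fun X hX =>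
    (map_zero f ▸ hfu).trans (hf _ (Set.mem_image_of_mem T hX))
  have hoff : ∀ X, X ⊙ G.adjMatrix ℝ = 0 →
      f (T X) = f (1, 0) * (t * X.trace - ∑ i, ∑ j, X i j) := by
    intro X hX
    have hray : ∀ s : ℝ, f (s, 0) = s * f (1, 0) := fun s => by
      rw [← smul_eq_mul, ← map_smul, Prod.smul_mk, smul_zero, smul_eq_mul, mul_one]
    rw [hT, hX, hray, mul_comm]
  have : Nonempty (Fin n) := ⟨⟨0, hn⟩⟩
  have hα : 0 < f (1, 0) := by
    have hI := inv_card_smul_one_mem_spectraplex (ι := Fin n)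
    have hIoff : ((Fintype.card (Fin n) : ℝ)⁻¹ • (1 : Matrix (Fin n) (Fin n) ℝ)) ⊙
        G.adjMatrix ℝ = 0 :=
      G.hadamard_adjMatrix_eq_zero_iff.mpr fun i j hij => by simp [one_apply_ne hij.ne]
    have := hpos _ hI
    rw [hoff _ hIoff, hI.2, mul_one, sum_inv_card_smul_one] at this
    have ht1 : 1 < t := (one_le_lovaszTheta hn G).trans_lt ht
    exact (pos_iff_pos_of_mul_pos this).2 (sub_pos.2 ht1)
  refine ⟨(f (1, 0))⁻¹ • (f.toLinearMap ∘ₗ T), fun X hX => ?_, fun X hX => ?_⟩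
  · simpa using mul_pos (inv_pos.mpr hα) (hpos X hX)
  · simp [hoff X hX, hα.ne']

theorem exists_posSemidef_of_lovaszTheta_lt (hn : 0 < n) {t : ℝ} (ht : lovaszTheta G < t) :
    ∃ M : Matrix (Fin n) (Fin n) ℝ, M.PosSemidef ∧
      ∀ i j, ¬ G.Adj i j → M i j = t * (1 : Matrix (Fin n) (Fin n) ℝ) i j - 1 := by
  classical
  obtain ⟨φ, hpos, hoff⟩ := exists_pos_functional_of_lovaszTheta_lt hn ht
  have hsingle : ∀ i j, ¬ G.Adj i j → φ (single i j 1) = t * (1 : Matrix _ _ ℝ) i j - 1 := by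
    intro i j hij
    have hE : single i j (1 : ℝ) ⊙ G.adjMatrix ℝ = 0 :=
      G.hadamard_adjMatrix_eq_zero_iff.mpr fun k l hkl =>
        single_apply_of_ne _ _ _ _ _ fun ⟨hik, hjl⟩ => hij (hik ▸ hjl ▸ hkl)
    rw [hoff _ hE, sum_single_apply]
    by_cases hij' : i = j
    · rw [hij', trace_single_eq_same, one_apply_eq]
    · rw [trace_single_eq_of_ne _ _ _ hij', one_apply_ne hij']
  refine ⟨symmetrizedMatrix φ, posSemidef_symmetrizedMatrix fun x =>
    nonneg_of_pos_on_spectraplex hpos (by simpa using posSemidef_vecMulVec_self_star x),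
    fun i j hij => ?_⟩
  simp [symmetrizedMatrix, hsingle i j hij, hsingle j i (fun h => hij h.symm), one_apply, eq_comm]

theorem natCast_le_mul_lovaszTheta_compl (hn : 0 < n) {t : ℝ} (ht : lovaszTheta G < t) :
    (n : ℝ) ≤ t * lovaszTheta Gᶜ := by
  obtain ⟨M, hM, hMoff⟩ := exists_posSemidef_of_lovaszTheta_lt hn ht
  have ht0 : 0 < t := (one_pos.trans_le (one_le_lovaszTheta hn G)).trans ht
  set J : Matrix (Fin n) (Fin n) ℝ := of fun _ _ => 1
  have hJ : J.PosSemidef := by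
    simpa [vecMulVec] using posSemidef_vecMulVec_self_star (1 : Fin n → ℝ)
  have htrace : (M + J).trace = t * n := by simp [J, trace, hMoff _ _ G.irrefl, mul_comm]
  have hsum : ∑ i, ∑ j, (M + J) i j = ∑ i, ∑ j, M i j + n ^ 2 := by
    simp [J, Finset.sum_add_distrib, sq]
  set Y := (t * n)⁻¹ • (M + J)
  have hY : Y ∈ spectraplex (Fin n) :=
    ⟨(hM.add hJ).smul (by positivity),
      by rw [trace_smul, htrace, smul_eq_mul, inv_mul_cancel₀ (by positivity)]⟩
  have hYoff : ∀ i j, Gᶜ.Adj i j → Y i j = 0 := fun i j ⟨hne, hnadj⟩ => by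
    simp [Y, J, hMoff i j hnadj, one_apply_ne hne]
  calc (n : ℝ) = t * ((t * n)⁻¹ * n ^ 2) := by field_simp
    _ ≤ t * ((t * n)⁻¹ * ∑ i, ∑ j, (M + J) i j) := by
      rw [hsum]; gcongr; exact le_add_of_nonneg_left hM.sum_apply_nonneg
    _ = t * ∑ i, ∑ j, Y i j := by simp only [Y, Matrix.smul_apply, smul_eq_mul, Finset.mul_sum]
    _ ≤ t * lovaszTheta Gᶜ := by gcongr; exact sum_le_lovaszTheta hY hYoff

end LovaszTheta

/-- For every graph G on n vertices, ϑ(G)·ϑ(Ḡ) ≥ n. -/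
theorem lovaszTheta_mul_compl_ge {n : ℕ} (G : SimpleGraph (Fin n)) :
    (n : ℝ) ≤ lovaszTheta G * lovaszTheta Gᶜ := by
  rcases n.eq_zero_or_pos with rfl | hn
  -- on `Fin 0` no matrix has trace `1`, so both thetas are `sSup ∅ = 0`
  · simp [lovaszTheta, Matrix.trace]
  have hq : 0 < lovaszTheta Gᶜ := one_pos.trans_le (one_le_lovaszTheta hn Gᶜ)
  rw [← div_le_iff₀ hq]
  refine le_of_forall_gt_imp_ge_of_dense fun t ht => ?_
  rw [div_le_iff₀ hq]
  exact natCast_le_mul_lovaszTheta_compl hn ht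
end
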